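/- arXiv:1611.06574 — 5 statements merged into one kernel-verified Lean document; each statement's English description precedes it below -/
import Mathlib

section
/- Let k ≥ 3, let θ be a nontrivial equivalence relation on E_k, and let ρ ⊆ E_k² be a partial order on E_k having a least element and a greatest element. Then Pol(θ) ∩ Pol(ρ) is not maximal in Pol(θ). -/
/-- A finitary operation on `Fin k`: a pair of an arity `n` and a function
`(Fin n → Fin k) → Fin k`. -/
abbrev Ops (k : ℕ) := Σ n : ℕ, ((Fin n → Fin k) → Fin k)

/-- The set of finitary operations preserving a binary relation `θ` on `Fin k`. -/
def PolB {k : ℕ} (θ : Set (Fin k × Fin k)) : Set (Ops k) :=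
  {f | ∀ a b : Fin f.1 → Fin k, (∀ i, (a i, b i) ∈ θ) → (f.2 a, f.2 b) ∈ θ}

/-- The set of finitary operations preserving an `h`-ary relation `ρ` on `Fin k`. -/
def PolH {k h : ℕ} (ρ : Set (Fin h → Fin k)) : Set (Ops k) :=
  {f | ∀ M : Fin h → Fin f.1 → Fin k,
    (∀ i, (fun j => M j i) ∈ ρ) → (fun j => f.2 (M j)) ∈ ρ}

/-- A clone: contains all projections and is closed under composition. -/
def IsClone {k : ℕ} (C : Set (Ops k)) : Prop :=
  (∀ (n : ℕ) (i : Fin n), (⟨n, fun x => x i⟩ : Ops k) ∈ C) ∧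
  (∀ (n m : ℕ) (f : (Fin n → Fin k) → Fin k) (g : Fin n → (Fin m → Fin k) → Fin k),
    (⟨n, f⟩ : Ops k) ∈ C → (∀ i, (⟨m, g i⟩ : Ops k) ∈ C) →
    (⟨m, fun x => f fun i => g i x⟩ : Ops k) ∈ C)

/-- `C` is maximal in `D`: `C ⊊ D` and no clone lies strictly between them. -/
def MaximalIn {k : ℕ} (C D : Set (Ops k)) : Prop :=
  C ⊂ D ∧ ∀ F : Set (Ops k), IsClone F → ¬(C ⊂ F ∧ F ⊂ D)

/-- `θ` is an equivalence relation (as a set of pairs). -/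
def IsEquivRel {A : Type*} (θ : Set (A × A)) : Prop :=
  (∀ a, (a, a) ∈ θ) ∧ (∀ a b, (a, b) ∈ θ → (b, a) ∈ θ) ∧
    (∀ a b c, (a, b) ∈ θ → (b, c) ∈ θ → (a, c) ∈ θ)

/-- The diagonal relation `Δ` on `Fin k`. -/
def diag (k : ℕ) : Set (Fin k × Fin k) := {p | p.1 = p.2}

/-- A nontrivial equivalence relation: `Δ ⊊ θ ⊊ (Fin k)²`. -/
def NontrivEquiv {k : ℕ} (θ : Set (Fin k × Fin k)) : Prop :=
  IsEquivRel θ ∧ diag k ⊂ θ ∧ θ ⊂ Set.univ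

/-- Relational composition `α ∘ β = {(a,c) : ∃ b, (a,b) ∈ α ∧ (b,c) ∈ β}`. -/
def relComp {k : ℕ} (α β : Set (Fin k × Fin k)) : Set (Fin k × Fin k) :=
  {p | ∃ b, (p.1, b) ∈ α ∧ (b, p.2) ∈ β}

/-- The set of equivalence classes of `θ`. -/
def classesOf {A : Type*} (θ : Set (A × A)) : Set (Set A) :=
  {S | ∃ a : A, S = {b | (a, b) ∈ θ}}

/-- Totally reflexive: every tuple with a repeated entry is in `ρ`. -/
def TotallyReflexive {k h : ℕ} (ρ : Set (Fin h → Fin k)) : Prop :=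
  ∀ v : Fin h → Fin k, (∃ i j : Fin h, i ≠ j ∧ v i = v j) → v ∈ ρ

/-- Totally symmetric: closed under all permutations of coordinates. -/
def TotallySymmetric {k h : ℕ} (ρ : Set (Fin h → Fin k)) : Prop :=
  ∀ (v : Fin h → Fin k) (σ : Equiv.Perm (Fin h)), v ∈ ρ → v ∘ ⇑σ ∈ ρ

/-- The center of an `h`-ary relation: elements `a` such that every tuple whose
first coordinate is `a` lies in `ρ`. -/
def center {k h : ℕ} (ρ : Set (Fin h → Fin k)) : Set (Fin k) :=
  {a | ∀ v : Fin h → Fin k, (∀ i : Fin h, (i : ℕ) = 0 → v i = a) → v ∈ ρ}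

/-- An `h`-ary central relation. -/
def IsCentralRel {k h : ℕ} (ρ : Set (Fin h → Fin k)) : Prop :=
  ρ ≠ Set.univ ∧ TotallyReflexive ρ ∧ TotallySymmetric ρ ∧ (center ρ).Nonempty

/-- `η = {(u₁,…,u_h) : (u₁,u₂) ∈ θ}` (0-indexed: first two coordinates θ-related). -/
def eta {k : ℕ} (h : ℕ) (θ : Set (Fin k × Fin k)) : Set (Fin h → Fin k) :=
  {v | ∀ i j : Fin h, (i : ℕ) = 0 → (j : ℕ) = 1 → (v i, v j) ∈ θ}

/-- `ρ_{l,θ}`: tuples whose coordinates from position `l` onwards can be moved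
inside their θ-classes so as to land in `ρ` (0-indexed coordinates). -/
def rhoTh {k h : ℕ} (l : ℕ) (θ : Set (Fin k × Fin k)) (ρ : Set (Fin h → Fin k)) :
    Set (Fin h → Fin k) :=
  {a | ∃ u : Fin h → Fin k, (∀ j : Fin h, l ≤ (j : ℕ) → (u j, a j) ∈ θ) ∧
    (fun j : Fin h => if (j : ℕ) < l then a j else u j) ∈ ρ}

/-- `ρ` is θ-closed: `ρ = ρ_{0,θ}`. -/
def ThetaClosed {k h : ℕ} (θ : Set (Fin k × Fin k)) (ρ : Set (Fin h → Fin k)) : Prop :=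
  ρ = rhoTh 0 θ ρ

/-- `γ_σ = {(a_{σ(1)},…,a_{σ(h)}) : a ∈ γ}`. -/
def permuted {k h : ℕ} (σ : Equiv.Perm (Fin h)) (γ : Set (Fin h → Fin k)) :
    Set (Fin h → Fin k) :=
  {w | w ∘ ⇑σ.symm ∈ γ}

/-- A transversal of order `l` for the θ-classes: a system of representatives
(pairwise θ-unrelated, meeting every class) such that every tuple whose
coordinates from position `l` onwards lie in `T` belongs to `ρ`. -/
def IsTransversal {k h : ℕ} (θ : Set (Fin k × Fin k)) (ρ : Set (Fin h → Fin k)) (l : ℕ)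
    (T : Set (Fin k)) : Prop :=
  (∀ u ∈ T, ∀ v ∈ T, u ≠ v → (u, v) ∉ θ) ∧
  (∀ a : Fin k, ∃ u ∈ T, (a, u) ∈ θ) ∧
  (∀ w : Fin h → Fin k, (∀ j : Fin h, l ≤ (j : ℕ) → w j ∈ T) → w ∈ ρ)

/-- `ρ` is weakly θ-closed of order `l` (`1 ≤ l ≤ h-1`). -/
def WeaklyThetaClosed {k h : ℕ} (θ : Set (Fin k × Fin k)) (ρ : Set (Fin h → Fin k))
    (l : ℕ) : Prop :=
  1 ≤ l ∧ l ≤ h - 1 ∧ (∃ T : Set (Fin k), IsTransversal θ ρ (l - 1) T) ∧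
  ρ = ⋂ σ : Equiv.Perm (Fin h), permuted σ (rhoTh l θ ρ)

/-- Type I: `η ⊆ ρ` and every θ-class contains a central element of `ρ`. -/
def TypeI {k h : ℕ} (θ : Set (Fin k × Fin k)) (ρ : Set (Fin h → Fin k)) : Prop :=
  eta h θ ⊆ ρ ∧ ∀ a : Fin k, ∃ c : Fin k, (a, c) ∈ θ ∧ c ∈ center ρ

/-- Type II: `ρ` is θ-closed. -/
def TypeII {k h : ℕ} (θ : Set (Fin k × Fin k)) (ρ : Set (Fin h → Fin k)) : Prop :=
  ThetaClosed θ ρ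

/-- Type III: `ρ` is weakly θ-closed of some order and `η ⊆ ρ`. -/
def TypeIII {k h : ℕ} (θ : Set (Fin k × Fin k)) (ρ : Set (Fin h → Fin k)) : Prop :=
  (∃ l : ℕ, WeaklyThetaClosed θ ρ l) ∧ eta h θ ⊆ ρ

/-- `τ` is a diagonal relation through `θ`. -/
def IsDiagonal {k h : ℕ} (θ : Set (Fin k × Fin k)) (τ : Set (Fin h → Fin k)) : Prop :=
  ∃ (ε₁ : Setoid (Fin h)) (ε₂ : Set (Fin h × Fin h)),
    (∀ p ∈ ε₂, (∀ j, ε₁.r p.1 j → p.1 ≤ j) ∧ (∀ j, ε₁.r p.2 j → p.2 ≤ j)) ∧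
    (∀ i : Fin h, (∀ j, ε₁.r i j → i ≤ j) → (i, i) ∈ ε₂) ∧
    (∀ i j, (i, j) ∈ ε₂ → (j, i) ∈ ε₂) ∧
    (∀ i j l, (i, j) ∈ ε₂ → (j, l) ∈ ε₂ → (i, l) ∈ ε₂) ∧
    τ = {a | (∀ i j, ε₁.r i j → a i = a j) ∧ (∀ i j, (i, j) ∈ ε₂ → (a i, a j) ∈ θ)}

/-- `ρ^l_{0,θ}`: `l`-tuples which can be moved inside their θ-classes so that
every `h`-tuple with all entries among the moved elements lies in `ρ`. -/
def rhoPow {k h : ℕ} (l : ℕ) (θ : Set (Fin k × Fin k)) (ρ : Set (Fin h → Fin k)) :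
    Set (Fin l → Fin k) :=
  {u | ∃ e : Fin l → Fin k, (∀ i, (e i, u i) ∈ θ) ∧
    ∀ w : Fin h → Fin k, (∀ j, ∃ i, w j = e i) → w ∈ ρ}

/-- An `h`-regular family of equivalence relations. -/
def IsHRegFamily {A : Type*} (h : ℕ) {m : ℕ} (T : Fin m → Set (A × A)) : Prop :=
  (∀ i, IsEquivRel (T i)) ∧
  (∀ i, (classesOf (T i)).ncard = h) ∧
  (∀ x : Fin m → A, (⋂ i, {b | (x i, b) ∈ T i}).Nonempty)

/-- The `h`-regular relation determined by the family `T`: tuples whose set of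
components meets at most `h-1` classes of each member of the family. -/
def hRegRel {A : Type*} (h : ℕ) {m : ℕ} (T : Fin m → Set (A × A)) : Set (Fin h → A) :=
  {a | ∀ i : Fin m, {S ∈ classesOf (T i) | ∃ j : Fin h, a j ∈ S}.ncard ≤ h - 1}

/-- `ρ` is an `h`-regular relation: determined by some `h`-regular family. -/
def IsHRegularRel {A : Type*} (h : ℕ) (ρ : Set (Fin h → A)) : Prop :=
  ∃ m : ℕ, 1 ≤ m ∧ ∃ T : Fin m → Set (A × A), IsHRegFamily h T ∧ ρ = hRegRel h T

/-!
The intermediate clone is `Pol(θ) ∩ Pol(γ)` for a binary relation `γ` chosen according to how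
`ρ` meets `θ`. If some θ-class contains elements `a < b`, take `γ = θ ∩ ρ`: the map sending
`a` to `b` and everything else to `a` preserves `θ` but not `γ`, while a map that is constant
on θ-classes and reverses a ρ-pair lying across two classes preserves `γ` but not `ρ`.
Otherwise `ρ ∩ θ = Δ`; take `γ = θ ∘ ρ ∘ θ`: any map into a single θ-class preserves `γ`, and
can be chosen to break `ρ` because `ρ` orders no two distinct θ-related elements, while the map
sending the θ-class of the least element `0` to the greatest element `1` and everything else to
`0` breaks `γ`, since `(1, 0) ∈ θ ∘ ρ ∘ θ` would force `0 θ 1`.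
-/

open Set

section Clones

variable {k : ℕ}

theorem isClone_polB (γ : Set (Fin k × Fin k)) : IsClone (PolB γ) :=
  ⟨fun _ i _ _ h => h i,
   fun _ _ _ g hf hg a b h => hf (fun i => g i a) (fun i => g i b) fun i => hg i a b h⟩

theorem IsClone.inter {C D : Set (Ops k)} (hC : IsClone C) (hD : IsClone D) :
    IsClone (C ∩ D) :=
  ⟨fun n i => ⟨hC.1 n i, hD.1 n i⟩,
   fun n m f g hf hg => ⟨hC.2 n m f g hf.1 fun i => (hg i).1,
     hD.2 n m f g hf.2 fun i => (hg i).2⟩⟩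

theorem polB_inter_subset_polB_inter (α β : Set (Fin k × Fin k)) :
    PolB α ∩ PolB β ⊆ PolB (α ∩ β) :=
  fun _ hf a b h => ⟨hf.1 a b fun i => (h i).1, hf.2 a b fun i => (h i).2⟩

theorem polB_inter_subset_polB_relComp (α β : Set (Fin k × Fin k)) :
    PolB α ∩ PolB β ⊆ PolB (relComp α β) := by
  intro f hf a b h
  choose c hac hcb using h
  exact ⟨f.2 c, hf.1 a c hac, hf.2 c b hcb⟩

/-- `D ∩ G` lies strictly between `C` and `D`. -/
theorem not_maximalIn_of_isClone {C D G : Set (Ops k)} (hD : IsClone D) (hG : IsClone G)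
    (hCG : C ⊆ G) {f g : Ops k} (hfD : f ∈ D) (hfG : f ∈ G) (hfC : f ∉ C)
    (hgD : g ∈ D) (hgG : g ∉ G) : ¬ MaximalIn C D := by
  rintro ⟨hCD, hmax⟩
  refine hmax (D ∩ G) (hD.inter hG) ⟨?_, ?_⟩
  · exact (ssubset_iff_of_subset (subset_inter hCD.subset hCG)).2 ⟨f, ⟨hfD, hfG⟩, hfC⟩
  · exact (ssubset_iff_of_subset inter_subset_left).2 ⟨g, hgD, fun hg => hgG hg.2⟩

def unaryOp (u : Fin k → Fin k) : Ops k := ⟨1, fun x => u (x 0)⟩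

theorem unaryOp_mem_polB_iff {u : Fin k → Fin k} {γ : Set (Fin k × Fin k)} :
    unaryOp u ∈ PolB γ ↔ ∀ a b, (a, b) ∈ γ → (u a, u b) ∈ γ :=
  ⟨fun hu a b h => hu (fun _ => a) (fun _ => b) fun _ => h,
   fun hu _ _ h => hu _ _ (h (0 : Fin 1))⟩

theorem unaryOp_mem_polB_of_forall_mem {u : Fin k → Fin k} {γ : Set (Fin k × Fin k)}
    (hu : ∀ a b, (u a, u b) ∈ γ) : unaryOp u ∈ PolB γ :=
  unaryOp_mem_polB_iff.2 fun a b _ => hu a b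

theorem unaryOp_mem_polB_of_eq_of_mem {u : Fin k → Fin k} {γ : Set (Fin k × Fin k)}
    (hγ : ∀ a, (a, a) ∈ γ) (hu : ∀ a b, (a, b) ∈ γ → u a = u b) : unaryOp u ∈ PolB γ :=
  unaryOp_mem_polB_iff.2 fun a b h => hu a b h ▸ hγ (u a)

end Clones

section Order

variable {k : ℕ} {θ ρ : Set (Fin k × Fin k)}

theorem IsEquivRel.mem_iff_of_mem (hθ : IsEquivRel θ) {a b : Fin k} (hab : (a, b) ∈ θ)
    (c : Fin k) : (a, c) ∈ θ ↔ (b, c) ∈ θ :=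
  ⟨hθ.2.2 b a c (hθ.2.1 a b hab), hθ.2.2 a b c hab⟩

theorem not_maximalIn_of_ne_of_mem_inter (hθ : IsEquivRel θ) (hrefl : ∀ a, (a, a) ∈ ρ)
    (hantisymm : ∀ a b, (a, b) ∈ ρ → (b, a) ∈ ρ → a = b)
    {a b : Fin k} (hab : (a, b) ∈ θ ∩ ρ) (hne : a ≠ b)
    {c d : Fin k} (hcdρ : (c, d) ∈ ρ) (hcdθ : (c, d) ∉ θ) :
    ¬ MaximalIn (PolB θ ∩ PolB ρ) (PolB θ) := by
  classical
  set reverseAcross : Fin k → Fin k := fun x => if (x, c) ∈ θ then d else c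
  have reverseAcross_eq : ∀ x y, (x, y) ∈ θ → reverseAcross x = reverseAcross y :=
    fun x y h => by simp only [reverseAcross, hθ.mem_iff_of_mem h]
  set reverseWithin : Fin k → Fin k := fun x => if x = a then b else a
  refine not_maximalIn_of_isClone (G := PolB (θ ∩ ρ)) (isClone_polB θ) (isClone_polB _)
    (polB_inter_subset_polB_inter θ ρ) (f := unaryOp reverseAcross) (g := unaryOp reverseWithin)
    (unaryOp_mem_polB_of_eq_of_mem hθ.1 reverseAcross_eq)
    (unaryOp_mem_polB_of_eq_of_mem (fun x => ⟨hθ.1 x, hrefl x⟩)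
      fun x y h => reverseAcross_eq x y h.1)
    ?_ ?_ ?_
  · intro h
    have hdc := (unaryOp_mem_polB_iff.1 h.2) c d hcdρ
    have hdc' : (d, c) ∉ θ := fun h' => hcdθ (hθ.2.1 d c h')
    simp only [reverseAcross, hθ.1 c, hdc', if_true, if_false] at hdc
    exact hcdθ (hantisymm c d hcdρ hdc ▸ hθ.1 c)
  · refine unaryOp_mem_polB_of_forall_mem fun x y => ?_
    have hba : (b, a) ∈ θ := hθ.2.1 a b hab.1
    simp only [reverseWithin]
    split_ifs
    exacts [hθ.1 b, hba, hab.1, hθ.1 a]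
  · intro h
    have hba := (unaryOp_mem_polB_iff.1 h) a b hab
    simp only [reverseWithin, if_true, hne.symm, if_false] at hba
    exact hne (hantisymm a b hab.2 hba.2)

theorem not_maximalIn_of_inter_subset_diag (hθ : NontrivEquiv θ) (hrefl : ∀ a, (a, a) ∈ ρ)
    (hantisymm : ∀ a b, (a, b) ∈ ρ → (b, a) ∈ ρ → a = b)
    (hsep : ∀ a b, (a, b) ∈ ρ → (a, b) ∈ θ → a = b)
    {bot top : Fin k} (hbot : ∀ x, (bot, x) ∈ ρ) (htop : ∀ x, (x, top) ∈ ρ) :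
    ¬ MaximalIn (PolB θ ∩ PolB ρ) (PolB θ) := by
  classical
  obtain ⟨hθ, hdiag, -⟩ := hθ
  obtain ⟨p, hpθ, hp⟩ := exists_of_ssubset hdiag
  have hbt : bot ≠ top := fun h =>
    hp ((hantisymm _ _ (hbot p.1) (h ▸ htop p.1)).symm.trans
      (hantisymm _ _ (hbot p.2) (h ▸ htop p.2)))
  have hbtθ : (top, bot) ∉ θ := fun h => hbt (hsep bot top (hbot top) (hθ.2.1 _ _ h))
  set γ := relComp (relComp θ ρ) θ
  have hθγ : θ ⊆ γ := fun q hq => ⟨q.1, ⟨q.1, hθ.1 _, hrefl _⟩, hq⟩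
  have hbot_top : (bot, top) ∈ γ := ⟨top, ⟨bot, hθ.1 _, hbot top⟩, hθ.1 _⟩
  have htop_bot : (top, bot) ∉ γ := by
    rintro ⟨v, ⟨u, htu, huv⟩, hvb⟩
    have hu : u = top := hsep u top (htop u) (hθ.2.1 _ _ htu)
    subst hu
    exact hbtθ (hantisymm _ _ (htop v) huv ▸ hvb)
  set squash : Fin k → Fin k := fun x => if x = bot then p.2 else p.1
  have squash_mem : ∀ x y, (squash x, squash y) ∈ θ := fun x y => by
    simp only [squash]
    split_ifs
    exacts [hθ.1 _, hθ.2.1 _ _ hpθ, hpθ, hθ.1 _]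
  set raise : Fin k → Fin k := fun x => if (x, bot) ∈ θ then top else bot
  refine not_maximalIn_of_isClone (G := PolB γ) (isClone_polB θ) (isClone_polB γ)
    (fun f hf => polB_inter_subset_polB_relComp _ _
      ⟨polB_inter_subset_polB_relComp _ _ hf, hf.1⟩)
    (f := unaryOp squash) (g := unaryOp raise)
    (unaryOp_mem_polB_of_forall_mem squash_mem)
    (unaryOp_mem_polB_of_forall_mem fun x y => hθγ (squash_mem x y)) ?_
    (unaryOp_mem_polB_of_eq_of_mem hθ.1 fun x y h => by
      simp only [raise, hθ.mem_iff_of_mem h])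
    ?_
  · intro h
    have h21 := (unaryOp_mem_polB_iff.1 h.2) bot top (hbot top)
    simp only [squash, if_true, hbt.symm, if_false] at h21
    exact hp (hsep _ _ h21 (hθ.2.1 _ _ hpθ)).symm
  · intro h
    have h10 := (unaryOp_mem_polB_iff.1 h) bot top hbot_top
    simp only [raise, hθ.1 bot, hbtθ, if_true, if_false] at h10
    exact htop_bot h10

end Order

theorem stmt0_general (k : ℕ)
    (θ : Set (Fin k × Fin k)) (hθ : NontrivEquiv θ)
    (ρ : Set (Fin k × Fin k))
    (hrefl : ∀ a, (a, a) ∈ ρ)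
    (hantisymm : ∀ a b, (a, b) ∈ ρ → (b, a) ∈ ρ → a = b)
    (hbot : ∃ e : Fin k, ∀ x, (e, x) ∈ ρ)
    (htop : ∃ e : Fin k, ∀ x, (x, e) ∈ ρ) :
    ¬ MaximalIn (PolB θ ∩ PolB ρ) (PolB θ) := by
  obtain ⟨bot, hbot⟩ := hbot
  obtain ⟨top, htop⟩ := htop
  by_cases hsep : ∀ a b, (a, b) ∈ ρ → (a, b) ∈ θ → a = b
  · exact not_maximalIn_of_inter_subset_diag hθ hrefl hantisymm hsep hbot htop
  push Not at hsep
  obtain ⟨a, b, habρ, habθ, hne⟩ := hsep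
  obtain ⟨⟨c, d⟩, -, hcd⟩ := exists_of_ssubset hθ.2.2
  have hρθ : ¬ ρ ⊆ θ := fun h => hcd <|
    hθ.1.2.2 c bot d (hθ.1.2.1 _ _ (h (hbot c))) (h (hbot d))
  obtain ⟨⟨c, d⟩, hcdρ, hcdθ⟩ := not_subset.1 hρθ
  exact not_maximalIn_of_ne_of_mem_inter hθ.1 hrefl hantisymm ⟨habθ, habρ⟩ hne hcdρ hcdθ

/-- If `θ` is a nontrivial equivalence relation and `ρ` is a partial order with
least and greatest elements on `E_k` (`k ≥ 3`), then `Pol(θ) ∩ Pol(ρ)` is not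
maximal in `Pol(θ)`. -/
theorem stmt0 (k : ℕ) (hk : 3 ≤ k)
    (θ : Set (Fin k × Fin k)) (hθ : NontrivEquiv θ)
    (ρ : Set (Fin k × Fin k))
    (hrefl : ∀ a, (a, a) ∈ ρ)
    (hantisymm : ∀ a b, (a, b) ∈ ρ → (b, a) ∈ ρ → a = b)
    (htrans : ∀ a b c, (a, b) ∈ ρ → (b, c) ∈ ρ → (a, c) ∈ ρ)
    (hbot : ∃ e : Fin k, ∀ x, (e, x) ∈ ρ)
    (htop : ∃ e : Fin k, ∀ x, (x, e) ∈ ρ) :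
    ¬ MaximalIn (PolB θ ∩ PolB ρ) (PolB θ) :=
  stmt0_general k θ hθ ρ hrefl hantisymm hbot htop
end

section
/- Let θ and ρ be two distinct nontrivial equivalence relations on the finite set E_k. Then Pol(θ) ∩ Pol(ρ) is maximal in Pol(θ) if and only if one of the following holds: (a) θ ⊊ ρ or ρ ⊊ θ; (b) ρ ∩ θ = Δ and ρ ∘ θ = E_k². -/
section Aux

private lemma choose_congr' {α : Sort*} {p q : α → Prop} (h : ∀ x, p x ↔ q x)
    (hp : ∃ x, p x) (hq : ∃ x, q x) : hp.choose = hq.choose := by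
  have hpq : p = q := funext fun x => propext (h x)
  subst hpq; rfl

lemma polB_isClone {k : ℕ} (α : Set (Fin k × Fin k)) : IsClone (PolB α) := by
  constructor
  · intro n i a b hab
    exact hab i
  · intro n m f g hf hg a b hab
    exact hf _ _ fun i => hg i a b hab

lemma isClone_inter {k : ℕ} {C D : Set (Ops k)} (hC : IsClone C) (hD : IsClone D) :
    IsClone (C ∩ D) := by
  constructor
  · exact fun n i => ⟨hC.1 n i, hD.1 n i⟩
  · intro n m f g hf hg
    exact ⟨hC.2 n m f g hf.1 fun i => (hg i).1, hD.2 n m f g hf.2 fun i => (hg i).2⟩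

lemma nullary_mem_polB {k : ℕ} {α : Set (Fin k × Fin k)} (hrefl : ∀ a, (a, a) ∈ α)
    (G : (Fin 0 → Fin k) → Fin k) : (⟨0, G⟩ : Ops k) ∈ PolB α := by
  intro a b _
  have : a = b := funext fun i => i.elim0
  subst this
  exact hrefl _

/-- Structure theorem for relations invariant under all operations preserving a
nested pair of equivalence relations `μ ⊆ ν`. -/
lemma structNested {k : ℕ} {ι : Type*} [Finite ι] (μ ν : Set (Fin k × Fin k))
    (hμ : IsEquivRel μ) (hν : IsEquivRel ν) (hsub : μ ⊆ ν) (c₀ : Fin k)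
    (Γ : Set (ι → Fin k))
    (hcl : ∀ (N : ℕ) (P : (Fin N → Fin k) → Fin k),
      (⟨N, P⟩ : Ops k) ∈ PolB μ → (⟨N, P⟩ : Ops k) ∈ PolB ν →
      ∀ M : Fin N → ι → Fin k, (∀ i, M i ∈ Γ) → (fun p => P (fun i => M i p)) ∈ Γ)
    (b : ι → Fin k)
    (hbΔ : ∀ p q : ι, (∀ t ∈ Γ, t p = t q) → b p = b q)
    (hbμ : ∀ p q : ι, (∀ t ∈ Γ, (t p, t q) ∈ μ) → (b p, b q) ∈ μ)
    (hbν : ∀ p q : ι, (∀ t ∈ Γ, (t p, t q) ∈ ν) → (b p, b q) ∈ ν) :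
    b ∈ Γ := by
  classical
  obtain ⟨N, ⟨e⟩⟩ := Finite.exists_equiv_fin ↥Γ
  set r : ι → Fin N → Fin k := fun p i => (e.symm i).1 p with hr
  have hrep : ∀ t, ∀ ht : t ∈ Γ, ∀ p : ι, t p = r p (e ⟨t, ht⟩) := by
    intro t ht p; simp [hr]
  have hrmem : ∀ i : Fin N, (fun p => r p i) ∈ Γ := by
    intro i
    have := (e.symm i).2
    simpa [hr] using this
  have hrowΔ : ∀ l m : ι, r l = r m → b l = b m := by
    intro l m h
    exact hbΔ l m fun t ht => by rw [hrep t ht l, hrep t ht m, h]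
  have hrowμ : ∀ l m : ι, (∀ i, (r l i, r m i) ∈ μ) → (b l, b m) ∈ μ := by
    intro l m h
    exact hbμ l m fun t ht => by rw [hrep t ht l, hrep t ht m]; exact h _
  have hrowν : ∀ l m : ι, (∀ i, (r l i, r m i) ∈ ν) → (b l, b m) ∈ ν := by
    intro l m h
    exact hbν l m fun t ht => by rw [hrep t ht l, hrep t ht m]; exact h _
  set G : (Fin N → Fin k) → Fin k := fun x =>
    if h0 : ∃ l : ι, x = r l then b h0.choose
    else if h1 : ∃ l : ι, ∀ i, (x i, r l i) ∈ μ then b h1.choose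
    else if h2 : ∃ l : ι, ∀ i, (x i, r l i) ∈ ν then b h2.choose
    else c₀ with hG
  have S1 : ∀ x, (∃ l : ι, ∀ i, (x i, r l i) ∈ μ) →
      ∃ lx, (∀ i, (x i, r lx i) ∈ μ) ∧ G x = b lx := by
    intro x h1
    by_cases h0 : ∃ l : ι, x = r l
    · exact ⟨h0.choose, fun i => by rw [← h0.choose_spec]; exact hμ.1 _,
        by simp [hG, dif_pos h0]⟩
    · exact ⟨h1.choose, h1.choose_spec, by simp [hG, dif_neg h0, dif_pos h1]⟩
  have S2 : ∀ x, (∃ l : ι, ∀ i, (x i, r l i) ∈ ν) →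
      ∃ lx, (∀ i, (x i, r lx i) ∈ ν) ∧ G x = b lx := by
    intro x h2
    by_cases h0 : ∃ l : ι, x = r l
    · exact ⟨h0.choose, fun i => by rw [← h0.choose_spec]; exact hν.1 _,
        by simp [hG, dif_pos h0]⟩
    · by_cases h1 : ∃ l : ι, ∀ i, (x i, r l i) ∈ μ
      · exact ⟨h1.choose, fun i => hsub (h1.choose_spec i),
          by simp [hG, dif_neg h0, dif_pos h1]⟩
      · exact ⟨h2.choose, h2.choose_spec, by simp [hG, dif_neg h0, dif_neg h1, dif_pos h2]⟩
  have S3 : ∀ x, ¬(∃ l : ι, ∀ i, (x i, r l i) ∈ ν) → G x = c₀ := by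
    intro x h2
    have h0 : ¬∃ l : ι, x = r l := by
      rintro ⟨l, hl⟩; exact h2 ⟨l, fun i => by rw [hl]; exact hν.1 _⟩
    have h1 : ¬∃ l : ι, ∀ i, (x i, r l i) ∈ μ := by
      rintro ⟨l, hl⟩; exact h2 ⟨l, fun i => hsub (hl i)⟩
    simp [hG, dif_neg h0, dif_neg h1, dif_neg h2]
  have hGμ : (⟨N, G⟩ : Ops k) ∈ PolB μ := by
    intro x y hxy
    show (G x, G y) ∈ μ
    by_cases h1x : ∃ l : ι, ∀ i, (x i, r l i) ∈ μ
    · obtain ⟨lx, hlx, hx⟩ := S1 x h1x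
      have h1y : ∃ l : ι, ∀ i, (y i, r l i) ∈ μ :=
        ⟨lx, fun i => hμ.2.2 _ _ _ (hμ.2.1 _ _ (hxy i)) (hlx i)⟩
      obtain ⟨ly, hly, hy⟩ := S1 y h1y
      rw [hx, hy]
      exact hrowμ lx ly fun i =>
        hμ.2.2 _ _ _ (hμ.2.1 _ _ (hlx i)) (hμ.2.2 _ _ _ (hxy i) (hly i))
    · have h1y : ¬∃ l : ι, ∀ i, (y i, r l i) ∈ μ := by
        rintro ⟨l, hl⟩; exact h1x ⟨l, fun i => hμ.2.2 _ _ _ (hxy i) (hl i)⟩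
      have h0x : ¬∃ l : ι, x = r l := by
        rintro ⟨l, hl⟩; exact h1x ⟨l, fun i => by rw [hl]; exact hμ.1 _⟩
      have h0y : ¬∃ l : ι, y = r l := by
        rintro ⟨l, hl⟩; exact h1y ⟨l, fun i => by rw [hl]; exact hμ.1 _⟩
      by_cases h2x : ∃ l : ι, ∀ i, (x i, r l i) ∈ ν
      · have h2y : ∃ l : ι, ∀ i, (y i, r l i) ∈ ν :=
          ⟨h2x.choose, fun i =>
            hν.2.2 _ _ _ (hν.2.1 _ _ (hsub (hxy i))) (h2x.choose_spec i)⟩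
        have hch : h2x.choose = h2y.choose := by
          refine choose_congr' (fun l => ⟨fun h i => ?_, fun h i => ?_⟩) h2x h2y
          · exact hν.2.2 _ _ _ (hν.2.1 _ _ (hsub (hxy i))) (h i)
          · exact hν.2.2 _ _ _ (hsub (hxy i)) (h i)
        have hxy' : G x = G y := by
          simp only [hG, dif_neg h0x, dif_neg h0y, dif_neg h1x, dif_neg h1y,
            dif_pos h2x, dif_pos h2y, hch]
        rw [hxy']
        exact hμ.1 _
      · have h2y : ¬∃ l : ι, ∀ i, (y i, r l i) ∈ ν := by
          rintro ⟨l, hl⟩; exact h2x ⟨l, fun i => hν.2.2 _ _ _ (hsub (hxy i)) (hl i)⟩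
        rw [S3 x h2x, S3 y h2y]
        exact hμ.1 _
  have hGν : (⟨N, G⟩ : Ops k) ∈ PolB ν := by
    intro x y hxy
    show (G x, G y) ∈ ν
    by_cases h2x : ∃ l : ι, ∀ i, (x i, r l i) ∈ ν
    · obtain ⟨lx, hlx, hx⟩ := S2 x h2x
      have h2y : ∃ l : ι, ∀ i, (y i, r l i) ∈ ν :=
        ⟨lx, fun i => hν.2.2 _ _ _ (hν.2.1 _ _ (hxy i)) (hlx i)⟩
      obtain ⟨ly, hly, hy⟩ := S2 y h2y
      rw [hx, hy]
      exact hrowν lx ly fun i =>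
        hν.2.2 _ _ _ (hν.2.1 _ _ (hlx i)) (hν.2.2 _ _ _ (hxy i) (hly i))
    · have h2y : ¬∃ l : ι, ∀ i, (y i, r l i) ∈ ν := by
        rintro ⟨l, hl⟩; exact h2x ⟨l, fun i => hν.2.2 _ _ _ (hxy i) (hl i)⟩
      rw [S3 x h2x, S3 y h2y]
      exact hν.1 _
  have hmem := hcl N G hGμ hGν (fun i p => r p i) (fun i => hrmem i)
  have hGr : ∀ p : ι, G (fun i => r p i) = b p := by
    intro p
    have h0 : ∃ l : ι, (fun i => r p i) = r l := ⟨p, rfl⟩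
    have hx : G (fun i => r p i) = b h0.choose := by simp [hG, dif_pos h0]
    rw [hx]
    exact (hrowΔ p h0.choose h0.choose_spec).symm
  have : (fun p => G (fun i => r p i)) = b := funext hGr
  rwa [this] at hmem

end Aux

section Product

/-- Structure theorem for relations invariant under all operations preserving a
pair of complementary factor equivalence relations. -/
lemma structProduct {k : ℕ} {ι : Type*} [Finite ι] (θ ρ : Set (Fin k × Fin k))
    (hθ : IsEquivRel θ) (hρ : IsEquivRel ρ)
    (hint : ρ ∩ θ = diag k) (hcomp : relComp ρ θ = Set.univ) (c₀ : Fin k)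
    (Γ : Set (ι → Fin k))
    (hcl : ∀ (N : ℕ) (P : (Fin N → Fin k) → Fin k),
      (⟨N, P⟩ : Ops k) ∈ PolB θ → (⟨N, P⟩ : Ops k) ∈ PolB ρ →
      ∀ M : Fin N → ι → Fin k, (∀ i, M i ∈ Γ) → (fun p => P (fun i => M i p)) ∈ Γ)
    (b : ι → Fin k)
    (hbθ : ∀ p q : ι, (∀ t ∈ Γ, (t p, t q) ∈ θ) → (b p, b q) ∈ θ)
    (hbρ : ∀ p q : ι, (∀ t ∈ Γ, (t p, t q) ∈ ρ) → (b p, b q) ∈ ρ) :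
    b ∈ Γ := by
  classical
  -- the "pasting" function
  have hw : ∀ a c : Fin k, ∃ z, (a, z) ∈ θ ∧ (c, z) ∈ ρ := by
    intro a c
    have : ((c, a) : Fin k × Fin k) ∈ relComp ρ θ := by rw [hcomp]; trivial
    obtain ⟨z, hz1, hz2⟩ := this
    exact ⟨z, hθ.2.1 _ _ hz2, hz1⟩
  have huniq : ∀ a c z z', (a, z) ∈ θ → (c, z) ∈ ρ → (a, z') ∈ θ → (c, z') ∈ ρ →
      z = z' := by
    intro a c z z' h1 h2 h3 h4
    have hzθ : (z, z') ∈ θ := hθ.2.2 _ _ _ (hθ.2.1 _ _ h1) h3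
    have hzρ : (z, z') ∈ ρ := hρ.2.2 _ _ _ (hρ.2.1 _ _ h2) h4
    have : (z, z') ∈ diag k := by rw [← hint]; exact ⟨hzρ, hzθ⟩
    exact this
  set w : Fin k → Fin k → Fin k := fun a c => (hw a c).choose with hwdef
  have hw1 : ∀ a c, (a, w a c) ∈ θ := fun a c => (hw a c).choose_spec.1
  have hw2 : ∀ a c, (c, w a c) ∈ ρ := fun a c => (hw a c).choose_spec.2
  obtain ⟨N, ⟨e⟩⟩ := Finite.exists_equiv_fin ↥Γ
  set r : ι → Fin N → Fin k := fun p i => (e.symm i).1 p with hr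
  have hrep : ∀ t, ∀ ht : t ∈ Γ, ∀ p : ι, t p = r p (e ⟨t, ht⟩) := by
    intro t ht p; simp [hr]
  have hrmem : ∀ i : Fin N, (fun p => r p i) ∈ Γ := by
    intro i
    have := (e.symm i).2
    simpa [hr] using this
  have hrowθ : ∀ l m : ι, (∀ i, (r l i, r m i) ∈ θ) → (b l, b m) ∈ θ := by
    intro l m h
    exact hbθ l m fun t ht => by rw [hrep t ht l, hrep t ht m]; exact h _
  have hrowρ : ∀ l m : ι, (∀ i, (r l i, r m i) ∈ ρ) → (b l, b m) ∈ ρ := by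
    intro l m h
    exact hbρ l m fun t ht => by rw [hrep t ht l, hrep t ht m]; exact h _
  set A : (Fin N → Fin k) → Fin k := fun x =>
    if h : ∃ l : ι, ∀ i, (x i, r l i) ∈ θ then b h.choose else c₀ with hA
  set B : (Fin N → Fin k) → Fin k := fun x =>
    if h : ∃ l : ι, ∀ i, (x i, r l i) ∈ ρ then b h.choose else c₀ with hB
  set G : (Fin N → Fin k) → Fin k := fun x => w (A x) (B x) with hG
  -- A is θ-invariant
  have hAθ : ∀ x y : Fin N → Fin k, (∀ i, (x i, y i) ∈ θ) → (A x, A y) ∈ θ := by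
    intro x y hxy
    by_cases h1 : ∃ l : ι, ∀ i, (x i, r l i) ∈ θ
    · have h2 : ∃ l : ι, ∀ i, (y i, r l i) ∈ θ :=
        ⟨h1.choose, fun i => hθ.2.2 _ _ _ (hθ.2.1 _ _ (hxy i)) (h1.choose_spec i)⟩
      simp only [hA, dif_pos h1, dif_pos h2]
      refine hrowθ _ _ fun i => ?_
      exact hθ.2.2 _ _ _ (hθ.2.1 _ _ (h1.choose_spec i))
        (hθ.2.2 _ _ _ (hxy i) (h2.choose_spec i))
    · have h2 : ¬∃ l : ι, ∀ i, (y i, r l i) ∈ θ := by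
        rintro ⟨l, hl⟩; exact h1 ⟨l, fun i => hθ.2.2 _ _ _ (hxy i) (hl i)⟩
      simp only [hA, dif_neg h1, dif_neg h2]
      exact hθ.1 _
  have hBρ : ∀ x y : Fin N → Fin k, (∀ i, (x i, y i) ∈ ρ) → (B x, B y) ∈ ρ := by
    intro x y hxy
    by_cases h1 : ∃ l : ι, ∀ i, (x i, r l i) ∈ ρ
    · have h2 : ∃ l : ι, ∀ i, (y i, r l i) ∈ ρ :=
        ⟨h1.choose, fun i => hρ.2.2 _ _ _ (hρ.2.1 _ _ (hxy i)) (h1.choose_spec i)⟩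
      simp only [hB, dif_pos h1, dif_pos h2]
      refine hrowρ _ _ fun i => ?_
      exact hρ.2.2 _ _ _ (hρ.2.1 _ _ (h1.choose_spec i))
        (hρ.2.2 _ _ _ (hxy i) (h2.choose_spec i))
    · have h2 : ¬∃ l : ι, ∀ i, (y i, r l i) ∈ ρ := by
        rintro ⟨l, hl⟩; exact h1 ⟨l, fun i => hρ.2.2 _ _ _ (hxy i) (hl i)⟩
      simp only [hB, dif_neg h1, dif_neg h2]
      exact hρ.1 _
  have hGθ : (⟨N, G⟩ : Ops k) ∈ PolB θ := by
    intro x y hxy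
    show (G x, G y) ∈ θ
    have h1 : (A x, A y) ∈ θ := hAθ x y hxy
    have h2 : (G x, A x) ∈ θ := hθ.2.1 _ _ (hw1 (A x) (B x))
    have h3 : (A y, G y) ∈ θ := hw1 (A y) (B y)
    exact hθ.2.2 _ _ _ (hθ.2.2 _ _ _ h2 h1) h3
  have hGρ : (⟨N, G⟩ : Ops k) ∈ PolB ρ := by
    intro x y hxy
    show (G x, G y) ∈ ρ
    have h1 : (B x, B y) ∈ ρ := hBρ x y hxy
    have h2 : (G x, B x) ∈ ρ := hρ.2.1 _ _ (hw2 (A x) (B x))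
    have h3 : (B y, G y) ∈ ρ := hw2 (A y) (B y)
    exact hρ.2.2 _ _ _ (hρ.2.2 _ _ _ h2 h1) h3
  have hmem := hcl N G hGθ hGρ (fun i p => r p i) (fun i => hrmem i)
  have hGr : ∀ p : ι, G (fun i => r p i) = b p := by
    intro p
    have h1 : ∃ l : ι, ∀ i, ((fun i => r p i) i, r l i) ∈ θ := ⟨p, fun i => hθ.1 _⟩
    have h2 : ∃ l : ι, ∀ i, ((fun i => r p i) i, r l i) ∈ ρ := ⟨p, fun i => hρ.1 _⟩
    have hAv : A (fun i => r p i) = b h1.choose := by simp [hA, dif_pos h1]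
    have hBv : B (fun i => r p i) = b h2.choose := by simp [hB, dif_pos h2]
    have hbA : (A (fun i => r p i), b p) ∈ θ := by
      rw [hAv]
      exact hθ.2.1 _ _ (hrowθ p h1.choose h1.choose_spec)
    have hbB : (B (fun i => r p i), b p) ∈ ρ := by
      rw [hBv]
      exact hρ.2.1 _ _ (hrowρ p h2.choose h2.choose_spec)
    show w (A fun i => r p i) (B fun i => r p i) = b p
    exact huniq (A fun i => r p i) (B fun i => r p i) _ _
      (hw1 _ _) (hw2 _ _) hbA hbB
  have : (fun p => G (fun i => r p i)) = b := funext hGr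
  rwa [this] at hmem

end Product

section Backward

set_option maxHeartbeats 2000000 in
lemma backwardMax {k : ℕ} (θ ρ : Set (Fin k × Fin k))
    (hθ : NontrivEquiv θ) (hρ : NontrivEquiv ρ) (hne : θ ≠ ρ)
    (hrhs : (θ ⊂ ρ ∨ ρ ⊂ θ) ∨ (ρ ∩ θ = diag k ∧ relComp ρ θ = Set.univ)) :
    MaximalIn (PolB θ ∩ PolB ρ) (PolB θ) := by
  classical
  obtain ⟨hθe, hθd, hθu⟩ := hθ
  obtain ⟨hρe, hρd, hρu⟩ := hρ
  -- a θ-preserving operation violating ρ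
  have hstrict : ∃ fop : Ops k, fop ∈ PolB θ ∧ fop ∉ PolB ρ := by
    rcases hrhs with (hsub | hsub) | ⟨hint, hcomp⟩
    · -- θ ⊂ ρ
      obtain ⟨x, hx1, hx2⟩ := Set.exists_of_ssubset hsub
      obtain ⟨a, b⟩ := x
      obtain ⟨y, -, hy2⟩ := Set.exists_of_ssubset hρu
      obtain ⟨c, d⟩ := y
      refine ⟨⟨1, fun x => if (x 0, a) ∈ θ then c else d⟩, ?_, ?_⟩
      · intro x y hxy
        show (if (x 0, a) ∈ θ then c else d, if (y 0, a) ∈ θ then c else d) ∈ θ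
        have hiff : (x 0, a) ∈ θ ↔ (y 0, a) ∈ θ :=
          ⟨fun h => hθe.2.2 _ _ _ (hθe.2.1 _ _ (hxy 0)) h,
           fun h => hθe.2.2 _ _ _ (hxy 0) h⟩
        by_cases h : (x 0, a) ∈ θ
        · rw [if_pos h, if_pos (hiff.mp h)]; exact hθe.1 _
        · rw [if_neg h, if_neg (fun h' => h (hiff.mpr h'))]; exact hθe.1 _
      · intro hmem
        have h2 : ((if ((a : Fin k), a) ∈ θ then c else d),
            (if ((b : Fin k), a) ∈ θ then c else d)) ∈ ρ :=
          hmem (fun _ => a) (fun _ => b) (fun _ => hx1)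
        rw [if_pos (hθe.1 a), if_neg (fun h => hx2 (hθe.2.1 _ _ h))] at h2
        exact hy2 h2
    · -- ρ ⊂ θ
      obtain ⟨x, hx1, hx2⟩ := Set.exists_of_ssubset hsub
      obtain ⟨a, b⟩ := x
      obtain ⟨y, hy1, hy2⟩ := Set.exists_of_ssubset hρd
      obtain ⟨p, q⟩ := y
      have hpq : p ≠ q := fun h => hy2 (by simpa [diag] using h)
      refine ⟨⟨1, fun x => if x 0 = p then a else b⟩, ?_, ?_⟩
      · intro x y _
        show (if x 0 = p then a else b, if y 0 = p then a else b) ∈ θ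
        by_cases h1 : x 0 = p <;> by_cases h2 : y 0 = p <;>
          simp only [if_pos, if_neg, h1, h2, if_true, if_false]
        · exact hθe.1 _
        · exact hx1
        · exact hθe.2.1 _ _ hx1
        · exact hθe.1 _
      · intro hmem
        have h2 : ((if (p : Fin k) = p then a else b),
            (if (q : Fin k) = p then a else b)) ∈ ρ :=
          hmem (fun _ => p) (fun _ => q) (fun _ => hy1)
        rw [if_pos rfl, if_neg (fun h => hpq h.symm)] at h2
        exact hx2 h2
    · -- product case
      obtain ⟨x, hx1, hx2⟩ := Set.exists_of_ssubset hθd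
      obtain ⟨a, b⟩ := x
      have hab : (a, b) ∉ ρ := fun h => hx2 (hint ▸ (⟨h, hx1⟩ : (a, b) ∈ ρ ∩ θ))
      obtain ⟨y, hy1, hy2⟩ := Set.exists_of_ssubset hρd
      obtain ⟨p, q⟩ := y
      have hpq : p ≠ q := fun h => hy2 (by simpa [diag] using h)
      refine ⟨⟨1, fun x => if x 0 = p then a else b⟩, ?_, ?_⟩
      · intro x y _
        show (if x 0 = p then a else b, if y 0 = p then a else b) ∈ θ
        by_cases h1 : x 0 = p <;> by_cases h2 : y 0 = p <;>
          simp only [if_pos, if_neg, h1, h2, if_true, if_false]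
        · exact hθe.1 _
        · exact hx1
        · exact hθe.2.1 _ _ hx1
        · exact hθe.1 _
      · intro hmem
        have h2 : ((if (p : Fin k) = p then a else b),
            (if (q : Fin k) = p then a else b)) ∈ ρ :=
          hmem (fun _ => p) (fun _ => q) (fun _ => hy1)
        rw [if_pos rfl, if_neg (fun h => hpq h.symm)] at h2
        exact hab h2
  obtain ⟨f₀, hf₀θ, hf₀ρ⟩ := hstrict
  constructor
  · -- strict inclusion
    rw [ssubset_iff_subset_ne]
    refine ⟨Set.inter_subset_left, fun h => ?_⟩
    have hmm : f₀ ∈ PolB θ ∩ PolB ρ := by rw [h]; exact hf₀θ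
    exact hf₀ρ hmm.2
  · -- no intermediate clone
    rintro F hF ⟨hCF, hFD⟩
    obtain ⟨fop, hfF, hfC⟩ := Set.exists_of_ssubset hCF
    have hfθ : fop ∈ PolB θ := hFD.subset hfF
    have hfρ : fop ∉ PolB ρ := fun h => hfC ⟨hfθ, h⟩
    obtain ⟨gop, hgθ, hgF⟩ := Set.exists_of_ssubset hFD
    obtain ⟨n, G⟩ := gop
    rcases n with _ | n
    · exact hgF (hCF.subset
        ⟨nullary_mem_polB (fun a => hθe.1 a) G, nullary_mem_polB (fun a => hρe.1 a) G⟩)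
    obtain ⟨nf, fF⟩ := fop
    set Γ : Set ((Fin (n + 1) → Fin k) → Fin k) :=
      {t | (⟨n + 1, t⟩ : Ops k) ∈ F} with hΓ
    have hcl : ∀ (N : ℕ) (P : (Fin N → Fin k) → Fin k),
        (⟨N, P⟩ : Ops k) ∈ PolB θ → (⟨N, P⟩ : Ops k) ∈ PolB ρ →
        ∀ M : Fin N → (Fin (n + 1) → Fin k) → Fin k,
          (∀ i, M i ∈ Γ) → (fun p => P (fun i => M i p)) ∈ Γ := by
      intro N P h1 h2 M hM
      exact hF.2 N (n + 1) P M (hCF.subset ⟨h1, h2⟩) hM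
    have hprojΓ : ∀ j : Fin (n + 1), (fun p : Fin (n + 1) → Fin k => p j) ∈ Γ :=
      fun j => hF.1 (n + 1) j
    have hfcl : ∀ M : Fin nf → (Fin (n + 1) → Fin k) → Fin k,
        (∀ s, M s ∈ Γ) → (fun p => fF (fun s => M s p)) ∈ Γ := by
      intro M hM
      exact hF.2 nf (n + 1) fF M hfF hM
    have hviol : ∃ va vb : Fin nf → Fin k,
        (∀ s, (va s, vb s) ∈ ρ) ∧ (fF va, fF vb) ∉ ρ := by
      by_contra hcon2
      push_neg at hcon2
      exact hfρ fun a b hab => hcon2 a b hab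
    obtain ⟨va, vb, hvab, hvio⟩ := hviol
    set c₀ : Fin k := fF va with hc₀
    have hGΔ : ∀ p q : Fin (n + 1) → Fin k, (∀ t ∈ Γ, t p = t q) → G p = G q := by
      intro p q h
      have : p = q := funext fun j => h _ (hprojΓ j)
      rw [this]
    have hGθc : ∀ p q : Fin (n + 1) → Fin k,
        (∀ t ∈ Γ, (t p, t q) ∈ θ) → (G p, G q) ∈ θ := by
      intro p q h
      exact hgθ p q fun j => h _ (hprojΓ j)
    rcases hrhs with (hsub | hsub) | ⟨hint, hcomp⟩
    · -- θ ⊂ ρ : ρ-constraints reduce to θ-constraints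
      have claim : ∀ p q : Fin (n + 1) → Fin k, (∀ t ∈ Γ, (t p, t q) ∈ ρ) →
          ∀ t ∈ Γ, (t p, t q) ∈ θ := by
        intro p q hpq
        by_contra hc
        push_neg at hc
        obtain ⟨t0, ht0, ht0n⟩ := hc
        set W : Fin nf → (Fin (n + 1) → Fin k) → Fin k :=
          fun s z => if (∀ t ∈ Γ, (t z, t q) ∈ θ) then vb s else va s with hW
        have hWmem : ∀ s, W s ∈ Γ := by
          intro s
          refine structNested θ ρ hθe hρe hsub.subset c₀ Γ hcl (W s) ?_ ?_ ?_
          · intro z z' h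
            have hiff : (∀ t ∈ Γ, (t z, t q) ∈ θ) ↔ (∀ t ∈ Γ, (t z', t q) ∈ θ) := by
              constructor <;> intro hh t ht
              · rw [← h t ht]; exact hh t ht
              · rw [h t ht]; exact hh t ht
            simp only [hW]
            by_cases hz : ∀ t ∈ Γ, (t z, t q) ∈ θ
            · rw [if_pos hz, if_pos (hiff.mp hz)]
            · rw [if_neg hz, if_neg fun hh => hz (hiff.mpr hh)]
          · intro z z' h
            have hiff : (∀ t ∈ Γ, (t z, t q) ∈ θ) ↔ (∀ t ∈ Γ, (t z', t q) ∈ θ) := by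
              constructor <;> intro hh t ht
              · exact hθe.2.2 _ _ _ (hθe.2.1 _ _ (h t ht)) (hh t ht)
              · exact hθe.2.2 _ _ _ (h t ht) (hh t ht)
            simp only [hW]
            by_cases hz : ∀ t ∈ Γ, (t z, t q) ∈ θ
            · rw [if_pos hz, if_pos (hiff.mp hz)]; exact hθe.1 _
            · rw [if_neg hz, if_neg fun hh => hz (hiff.mpr hh)]; exact hθe.1 _
          · intro z z' _
            simp only [hW]
            by_cases hz : ∀ t ∈ Γ, (t z, t q) ∈ θ <;>
              by_cases hz' : ∀ t ∈ Γ, (t z', t q) ∈ θ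
            · rw [if_pos hz, if_pos hz']; exact hρe.1 _
            · rw [if_pos hz, if_neg hz']; exact hρe.2.1 _ _ (hvab s)
            · rw [if_neg hz, if_pos hz']; exact hvab s
            · rw [if_neg hz, if_neg hz']; exact hρe.1 _
        have hmem2 := hfcl W hWmem
        have hl : (fun s => W s p) = va := by
          funext s
          simp only [hW]
          exact if_neg fun hh => ht0n (hh t0 ht0)
        have hm : (fun s => W s q) = vb := by
          funext s
          simp only [hW]
          exact if_pos fun t ht => hθe.1 _
        have h2 : (fF (fun s => W s p), fF (fun s => W s q)) ∈ ρ := hpq _ hmem2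
        rw [hl, hm] at h2
        exact hvio h2
      have hGρc : ∀ p q : Fin (n + 1) → Fin k,
          (∀ t ∈ Γ, (t p, t q) ∈ ρ) → (G p, G q) ∈ ρ := by
        intro p q h
        exact hsub.subset (hGθc p q (claim p q h))
      exact hgF (structNested θ ρ hθe hρe hsub.subset c₀ Γ hcl G hGΔ hGθc hGρc)
    · -- ρ ⊂ θ : ρ-constraints reduce to equality constraints
      have claim : ∀ p q : Fin (n + 1) → Fin k, (∀ t ∈ Γ, (t p, t q) ∈ ρ) →
          ∀ t ∈ Γ, t p = t q := by
        intro p q hpq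
        by_contra hc
        push_neg at hc
        obtain ⟨t0, ht0, ht0n⟩ := hc
        set W : Fin nf → (Fin (n + 1) → Fin k) → Fin k :=
          fun s z => if (∀ t ∈ Γ, t z = t q) then vb s else va s with hW
        have hWmem : ∀ s, W s ∈ Γ := by
          intro s
          refine structNested ρ θ hρe hθe hsub.subset c₀ Γ
            (fun N P h1 h2 M hM => hcl N P h2 h1 M hM) (W s) ?_ ?_ ?_
          · intro z z' h
            have hiff : (∀ t ∈ Γ, t z = t q) ↔ (∀ t ∈ Γ, t z' = t q) := by
              constructor <;> intro hh t ht
              · rw [← h t ht]; exact hh t ht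
              · rw [h t ht]; exact hh t ht
            simp only [hW]
            by_cases hz : ∀ t ∈ Γ, t z = t q
            · rw [if_pos hz, if_pos (hiff.mp hz)]
            · rw [if_neg hz, if_neg fun hh => hz (hiff.mpr hh)]
          · intro z z' _
            simp only [hW]
            by_cases hz : ∀ t ∈ Γ, t z = t q <;>
              by_cases hz' : ∀ t ∈ Γ, t z' = t q
            · rw [if_pos hz, if_pos hz']; exact hρe.1 _
            · rw [if_pos hz, if_neg hz']; exact hρe.2.1 _ _ (hvab s)
            · rw [if_neg hz, if_pos hz']; exact hvab s
            · rw [if_neg hz, if_neg hz']; exact hρe.1 _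
          · intro z z' _
            simp only [hW]
            by_cases hz : ∀ t ∈ Γ, t z = t q <;>
              by_cases hz' : ∀ t ∈ Γ, t z' = t q
            · rw [if_pos hz, if_pos hz']; exact hθe.1 _
            · rw [if_pos hz, if_neg hz']; exact hθe.2.1 _ _ (hsub.subset (hvab s))
            · rw [if_neg hz, if_pos hz']; exact hsub.subset (hvab s)
            · rw [if_neg hz, if_neg hz']; exact hθe.1 _
        have hmem2 := hfcl W hWmem
        have hl : (fun s => W s p) = va := by
          funext s
          simp only [hW]
          exact if_neg fun hh => ht0n (hh t0 ht0)
        have hm : (fun s => W s q) = vb := by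
          funext s
          simp only [hW]
          simp
        have h2 : (fF (fun s => W s p), fF (fun s => W s q)) ∈ ρ := hpq _ hmem2
        rw [hl, hm] at h2
        exact hvio h2
      have hGρc : ∀ p q : Fin (n + 1) → Fin k,
          (∀ t ∈ Γ, (t p, t q) ∈ ρ) → (G p, G q) ∈ ρ := by
        intro p q h
        rw [hGΔ p q (claim p q h)]
        exact hρe.1 _
      exact hgF (structNested ρ θ hρe hθe hsub.subset c₀ Γ
        (fun N P h1 h2 M hM => hcl N P h2 h1 M hM) G hGΔ hGρc hGθc)
    · -- product case : ρ-constraints reduce to equality constraints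
      have claim : ∀ p q : Fin (n + 1) → Fin k, (∀ t ∈ Γ, (t p, t q) ∈ ρ) →
          ∀ t ∈ Γ, t p = t q := by
        intro p q hpq
        by_contra hc
        push_neg at hc
        obtain ⟨t0, ht0, ht0n⟩ := hc
        set W : Fin nf → (Fin (n + 1) → Fin k) → Fin k :=
          fun s z => if (∀ t ∈ Γ, (t z, t q) ∈ θ) then vb s else va s with hW
        have hWmem : ∀ s, W s ∈ Γ := by
          intro s
          refine structProduct θ ρ hθe hρe hint hcomp c₀ Γ hcl (W s) ?_ ?_
          · intro z z' h
            have hiff : (∀ t ∈ Γ, (t z, t q) ∈ θ) ↔ (∀ t ∈ Γ, (t z', t q) ∈ θ) := by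
              constructor <;> intro hh t ht
              · exact hθe.2.2 _ _ _ (hθe.2.1 _ _ (h t ht)) (hh t ht)
              · exact hθe.2.2 _ _ _ (h t ht) (hh t ht)
            simp only [hW]
            by_cases hz : ∀ t ∈ Γ, (t z, t q) ∈ θ
            · rw [if_pos hz, if_pos (hiff.mp hz)]; exact hθe.1 _
            · rw [if_neg hz, if_neg fun hh => hz (hiff.mpr hh)]; exact hθe.1 _
          · intro z z' _
            simp only [hW]
            by_cases hz : ∀ t ∈ Γ, (t z, t q) ∈ θ <;>
              by_cases hz' : ∀ t ∈ Γ, (t z', t q) ∈ θ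
            · rw [if_pos hz, if_pos hz']; exact hρe.1 _
            · rw [if_pos hz, if_neg hz']; exact hρe.2.1 _ _ (hvab s)
            · rw [if_neg hz, if_pos hz']; exact hvab s
            · rw [if_neg hz, if_neg hz']; exact hρe.1 _
        have hmem2 := hfcl W hWmem
        have hl : (fun s => W s p) = va := by
          funext s
          simp only [hW]
          refine if_neg fun hh => ht0n ?_
          have h1 : (t0 p, t0 q) ∈ θ := hh t0 ht0
          have h2 : (t0 p, t0 q) ∈ ρ := hpq t0 ht0
          have : (t0 p, t0 q) ∈ diag k := hint ▸ (⟨h2, h1⟩ : (t0 p, t0 q) ∈ ρ ∩ θ)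
          exact this
        have hm : (fun s => W s q) = vb := by
          funext s
          simp only [hW]
          exact if_pos fun t ht => hθe.1 _
        have h2 : (fF (fun s => W s p), fF (fun s => W s q)) ∈ ρ := hpq _ hmem2
        rw [hl, hm] at h2
        exact hvio h2
      have hGρc : ∀ p q : Fin (n + 1) → Fin k,
          (∀ t ∈ Γ, (t p, t q) ∈ ρ) → (G p, G q) ∈ ρ := by
        intro p q h
        rw [hGΔ p q (claim p q h)]
        exact hρe.1 _
      exact hgF (structProduct θ ρ hθe hρe hint hcomp c₀ Γ hcl G hGθc hGρc)

end Backward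

section Forward

set_option maxHeartbeats 1000000 in
lemma forwardMax {k : ℕ} (θ ρ : Set (Fin k × Fin k))
    (hθ : NontrivEquiv θ) (hρ : NontrivEquiv ρ) (hne : θ ≠ ρ)
    (hmax : MaximalIn (PolB θ ∩ PolB ρ) (PolB θ)) :
    (θ ⊂ ρ ∨ ρ ⊂ θ) ∨ (ρ ∩ θ = diag k ∧ relComp ρ θ = Set.univ) := by
  classical
  obtain ⟨hθe, hθd, hθu⟩ := hθ
  obtain ⟨hρe, hρd, hρu⟩ := hρ
  by_contra hcon
  push_neg at hcon
  obtain ⟨⟨h1, h2⟩, h3⟩ := hcon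
  have hθρ : ¬θ ⊆ ρ := by
    intro hsub
    exact h1 (ssubset_iff_subset_ne.mpr ⟨hsub, hne⟩)
  have hρθ : ¬ρ ⊆ θ := by
    intro hsub
    exact h2 (ssubset_iff_subset_ne.mpr ⟨hsub, hne.symm⟩)
  obtain ⟨xuv, huv1, huv2⟩ := Set.not_subset.mp hθρ
  obtain ⟨u, v⟩ := xuv
  obtain ⟨xab, hab1, hab2⟩ := Set.not_subset.mp hρθ
  obtain ⟨a, b⟩ := xab
  have hba : ¬(b, a) ∈ θ := fun h => hab2 (hθe.2.1 _ _ h)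
  by_cases hint : ρ ∩ θ = diag k
  · -- use σ = relComp ρ θ
    have hσu : relComp ρ θ ≠ Set.univ := h3 hint
    set σ : Set (Fin k × Fin k) := relComp ρ θ with hσ
    have hθσ : θ ⊆ σ := fun x hx => ⟨x.1, hρe.1 _, hx⟩
    have hCF : PolB θ ∩ PolB ρ ⊆ PolB θ ∩ PolB σ := by
      rintro P ⟨hP1, hP2⟩
      refine ⟨hP1, ?_⟩
      intro x y hxy
      have hz : ∀ i, ∃ w, (x i, w) ∈ ρ ∧ (w, y i) ∈ θ := fun i => hxy i
      refine ⟨P.2 fun i => (hz i).choose, ?_, ?_⟩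
      · exact hP2 x (fun i => (hz i).choose) fun i => (hz i).choose_spec.1
      · exact hP1 (fun i => (hz i).choose) y fun i => (hz i).choose_spec.2
    have habne : a ≠ b := fun h => hab2 (h ▸ hθe.1 a)
    -- f₂ ∈ F \ C
    set f₂ : Ops k := ⟨1, fun x => if x 0 = a then u else v⟩ with hf₂
    have hf₂θ : f₂ ∈ PolB θ := by
      intro x y _
      show (if x 0 = a then u else v, if y 0 = a then u else v) ∈ θ
      by_cases hx : x 0 = a <;> by_cases hy : y 0 = a
      · rw [if_pos hx, if_pos hy]; exact hθe.1 _
      · rw [if_pos hx, if_neg hy]; exact huv1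
      · rw [if_neg hx, if_pos hy]; exact hθe.2.1 _ _ huv1
      · rw [if_neg hx, if_neg hy]; exact hθe.1 _
    have hf₂σ : f₂ ∈ PolB σ := by
      intro x y _
      show (if x 0 = a then u else v, if y 0 = a then u else v) ∈ σ
      by_cases hx : x 0 = a <;> by_cases hy : y 0 = a
      · rw [if_pos hx, if_pos hy]; exact hθσ (hθe.1 _)
      · rw [if_pos hx, if_neg hy]; exact hθσ huv1
      · rw [if_neg hx, if_pos hy]; exact hθσ (hθe.2.1 _ _ huv1)
      · rw [if_neg hx, if_neg hy]; exact hθσ (hθe.1 _)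
    have hf₂ρ : f₂ ∉ PolB ρ := by
      intro hmem
      have hh : ((if (a : Fin k) = a then u else v),
          (if (b : Fin k) = a then u else v)) ∈ ρ :=
        hmem (fun _ => a) (fun _ => b) fun _ => hab1
      rw [if_pos rfl, if_neg (fun h => habne h.symm)] at hh
      exact huv2 hh
    -- g₂ ∈ D \ F
    obtain ⟨ycd, hycd⟩ : ∃ y, y ∉ σ := by
      by_contra hc
      push_neg at hc
      exact hσu (Set.eq_univ_iff_forall.mpr fun y => hc y)
    obtain ⟨c, d⟩ := ycd
    set g₂ : Ops k := ⟨1, fun x => if (x 0, a) ∈ θ then c else d⟩ with hg₂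
    have hg₂θ : g₂ ∈ PolB θ := by
      intro x y hxy
      show (if (x 0, a) ∈ θ then c else d, if (y 0, a) ∈ θ then c else d) ∈ θ
      have hiff : (x 0, a) ∈ θ ↔ (y 0, a) ∈ θ :=
        ⟨fun h => hθe.2.2 _ _ _ (hθe.2.1 _ _ (hxy 0)) h,
         fun h => hθe.2.2 _ _ _ (hxy 0) h⟩
      by_cases hx : (x 0, a) ∈ θ
      · rw [if_pos hx, if_pos (hiff.mp hx)]; exact hθe.1 _
      · rw [if_neg hx, if_neg fun h => hx (hiff.mpr h)]; exact hθe.1 _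
    have hg₂σ : g₂ ∉ PolB σ := by
      intro hmem
      have hh : ((if ((a : Fin k), a) ∈ θ then c else d),
          (if ((b : Fin k), a) ∈ θ then c else d)) ∈ σ :=
        hmem (fun _ => a) (fun _ => b) fun _ => ⟨b, hab1, hθe.1 b⟩
      rw [if_pos (hθe.1 a), if_neg hba] at hh
      exact hycd hh
    refine hmax.2 (PolB θ ∩ PolB σ)
      (isClone_inter (polB_isClone θ) (polB_isClone σ)) ⟨?_, ?_⟩
    · rw [ssubset_iff_subset_ne]
      refine ⟨hCF, fun he => ?_⟩
      have : f₂ ∈ PolB θ ∩ PolB ρ := by rw [he]; exact ⟨hf₂θ, hf₂σ⟩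
      exact hf₂ρ this.2
    · rw [ssubset_iff_subset_ne]
      refine ⟨Set.inter_subset_left, fun he => ?_⟩
      have : g₂ ∈ PolB θ ∩ PolB σ := by rw [he]; exact hg₂θ
      exact hg₂σ this.2
  · -- use σ = ρ ∩ θ
    set σ : Set (Fin k × Fin k) := ρ ∩ θ with hσ
    have hdσ : diag k ⊆ σ := fun x hx => by
      obtain ⟨x1, x2⟩ := x
      have : x1 = x2 := hx
      exact this ▸ ⟨hρe.1 _, hθe.1 _⟩
    obtain ⟨ypq, hpq1, hpq2⟩ : ∃ y ∈ σ, y ∉ diag k := by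
      by_contra hc
      push_neg at hc
      exact hint (Set.Subset.antisymm hc hdσ)
    obtain ⟨p, q⟩ := ypq
    have hpqne : p ≠ q := fun h => hpq2 h
    have hCF : PolB θ ∩ PolB ρ ⊆ PolB θ ∩ PolB σ := by
      rintro P ⟨hP1, hP2⟩
      refine ⟨hP1, ?_⟩
      intro x y hxy
      exact ⟨hP2 x y fun i => (hxy i).1, hP1 x y fun i => (hxy i).2⟩
    -- f₁ ∈ F \ C
    set f₁ : Ops k := ⟨1, fun x => if (x 0, a) ∈ σ then u else v⟩ with hf₁
    have hf₁θ : f₁ ∈ PolB θ := by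
      intro x y _
      show (if (x 0, a) ∈ σ then u else v, if (y 0, a) ∈ σ then u else v) ∈ θ
      by_cases hx : (x 0, a) ∈ σ <;> by_cases hy : (y 0, a) ∈ σ
      · rw [if_pos hx, if_pos hy]; exact hθe.1 _
      · rw [if_pos hx, if_neg hy]; exact huv1
      · rw [if_neg hx, if_pos hy]; exact hθe.2.1 _ _ huv1
      · rw [if_neg hx, if_neg hy]; exact hθe.1 _
    have hf₁σ : f₁ ∈ PolB σ := by
      intro x y hxy
      show (if (x 0, a) ∈ σ then u else v, if (y 0, a) ∈ σ then u else v) ∈ σ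
      have hiff : (x 0, a) ∈ σ ↔ (y 0, a) ∈ σ := by
        constructor <;> intro h
        · exact ⟨hρe.2.2 _ _ _ (hρe.2.1 _ _ (hxy 0).1) h.1,
            hθe.2.2 _ _ _ (hθe.2.1 _ _ (hxy 0).2) h.2⟩
        · exact ⟨hρe.2.2 _ _ _ (hxy 0).1 h.1, hθe.2.2 _ _ _ (hxy 0).2 h.2⟩
      by_cases hx : (x 0, a) ∈ σ
      · rw [if_pos hx, if_pos (hiff.mp hx)]; exact ⟨hρe.1 _, hθe.1 _⟩
      · rw [if_neg hx, if_neg fun h => hx (hiff.mpr h)]; exact ⟨hρe.1 _, hθe.1 _⟩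
    have hf₁ρ : f₁ ∉ PolB ρ := by
      intro hmem
      have hh : ((if ((a : Fin k), a) ∈ σ then u else v),
          (if ((b : Fin k), a) ∈ σ then u else v)) ∈ ρ :=
        hmem (fun _ => a) (fun _ => b) fun _ => hab1
      rw [if_pos ⟨hρe.1 a, hθe.1 a⟩, if_neg (fun h => hba h.2)] at hh
      exact huv2 hh
    -- g₁ ∈ D \ F
    set g₁ : Ops k := ⟨1, fun x => if x 0 = q then v else u⟩ with hg₁
    have hg₁θ : g₁ ∈ PolB θ := by
      intro x y _
      show (if x 0 = q then v else u, if y 0 = q then v else u) ∈ θ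
      by_cases hx : x 0 = q <;> by_cases hy : y 0 = q
      · rw [if_pos hx, if_pos hy]; exact hθe.1 _
      · rw [if_pos hx, if_neg hy]; exact hθe.2.1 _ _ huv1
      · rw [if_neg hx, if_pos hy]; exact huv1
      · rw [if_neg hx, if_neg hy]; exact hθe.1 _
    have hg₁σ : g₁ ∉ PolB σ := by
      intro hmem
      have hh : ((if (p : Fin k) = q then v else u),
          (if (q : Fin k) = q then v else u)) ∈ σ :=
        hmem (fun _ => p) (fun _ => q) fun _ => hpq1
      rw [if_neg hpqne, if_pos rfl] at hh
      exact huv2 hh.1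
    refine hmax.2 (PolB θ ∩ PolB σ)
      (isClone_inter (polB_isClone θ) (polB_isClone σ)) ⟨?_, ?_⟩
    · rw [ssubset_iff_subset_ne]
      refine ⟨hCF, fun he => ?_⟩
      have : f₁ ∈ PolB θ ∩ PolB ρ := by rw [he]; exact ⟨hf₁θ, hf₁σ⟩
      exact hf₁ρ this.2
    · rw [ssubset_iff_subset_ne]
      refine ⟨Set.inter_subset_left, fun he => ?_⟩
      have : g₁ ∈ PolB θ ∩ PolB σ := by rw [he]; exact hg₁θ
      exact hg₁σ this.2

end Forward

theorem stmt2' (k : ℕ) (θ ρ : Set (Fin k × Fin k))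
    (hθ : NontrivEquiv θ) (hρ : NontrivEquiv ρ) (hne : θ ≠ ρ) :
    MaximalIn (PolB θ ∩ PolB ρ) (PolB θ) ↔
      ((θ ⊂ ρ ∨ ρ ⊂ θ) ∨ (ρ ∩ θ = diag k ∧ relComp ρ θ = Set.univ)) :=
  ⟨forwardMax θ ρ hθ hρ hne, backwardMax θ ρ hθ hρ hne⟩

/-- For distinct nontrivial equivalence relations `θ` and `ρ` on `E_k`,
`Pol(θ) ∩ Pol(ρ)` is maximal in `Pol(θ)` iff (a) `θ ⊊ ρ` or `ρ ⊊ θ`, or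
(b) `ρ ∩ θ = Δ` and `ρ ∘ θ = E_k²`. -/
theorem stmt2 (k : ℕ) (θ ρ : Set (Fin k × Fin k))
    (hθ : NontrivEquiv θ) (hρ : NontrivEquiv ρ) (hne : θ ≠ ρ) :
    MaximalIn (PolB θ ∩ PolB ρ) (PolB θ) ↔
      ((θ ⊂ ρ ∨ ρ ⊂ θ) ∨ (ρ ∩ θ = diag k ∧ relComp ρ θ = Set.univ)) := by
  exact ⟨forwardMax θ ρ hθ hρ hne, backwardMax θ ρ hθ hρ hne⟩
end

section
/- Let θ and ρ be two distinct nontrivial equivalence relations on E_k satisfying either (a) θ ⊊ ρ or ρ ⊊ θ, or (b) ρ ∩ θ = Δ and ρ ∘ θ = E_k². If β is a nonempty binary relation on E_k such that Pol(θ) ∩ Pol(ρ) ⊆ Pol(β), then β ∈ {Δ, ρ, θ, E_k²}. -/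
section Aux

variable {k : ℕ}

open Classical in
/-- A unary map collapsing the θ-class of `a` to `x` and (part of) the class of `b` to `y`. -/
noncomputable def tc (θ : Set (Fin k × Fin k)) (a b x y : Fin k) : Fin k → Fin k :=
  fun z => if (z, a) ∈ θ then x else if (z, b) ∈ θ then y else z

lemma tc_pres {θ : Set (Fin k × Fin k)} (hθ : IsEquivRel θ) (a b x y : Fin k)
    {z z' : Fin k} (h : (z, z') ∈ θ) : (tc θ a b x y z, tc θ a b x y z') ∈ θ := by
  have e1 : (z, a) ∈ θ ↔ (z', a) ∈ θ :=
    ⟨fun h' => hθ.2.2 _ _ _ (hθ.2.1 _ _ h) h', fun h' => hθ.2.2 _ _ _ h h'⟩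
  have e2 : (z, b) ∈ θ ↔ (z', b) ∈ θ :=
    ⟨fun h' => hθ.2.2 _ _ _ (hθ.2.1 _ _ h) h', fun h' => hθ.2.2 _ _ _ h h'⟩
  unfold tc
  by_cases ha : (z, a) ∈ θ
  · rw [if_pos ha, if_pos (e1.1 ha)]; exact hθ.1 x
  · rw [if_neg ha, if_neg (fun h' => ha (e1.2 h'))]
    by_cases hb : (z, b) ∈ θ
    · rw [if_pos hb, if_pos (e2.1 hb)]; exact hθ.1 y
    · rw [if_neg hb, if_neg (fun h' => hb (e2.2 h'))]; exact h

lemma tc_eval_left {θ : Set (Fin k × Fin k)} {a z : Fin k} (b x y : Fin k)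
    (h : (z, a) ∈ θ) : tc θ a b x y z = x := by
  unfold tc; rw [if_pos h]

lemma tc_eval_mid {θ : Set (Fin k × Fin k)} {a b z : Fin k} (x y : Fin k)
    (h1 : (z, a) ∉ θ) (h2 : (z, b) ∈ θ) : tc θ a b x y z = y := by
  unfold tc; rw [if_neg h1, if_pos h2]

/-- Case (a): comparable equivalence relations. -/
lemma caseA {θ ρ : Set (Fin k × Fin k)} (hθ : IsEquivRel θ) (hρ : IsEquivRel ρ)
    (hss : θ ⊆ ρ) (β : Set (Fin k × Fin k)) (hd : diag k ⊆ β)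
    (inv1 : ∀ u : Fin k → Fin k, (∀ x y, (x, y) ∈ θ → (u x, u y) ∈ θ) →
      (∀ x y, (x, y) ∈ ρ → (u x, u y) ∈ ρ) → ∀ p q, (p, q) ∈ β → (u p, u q) ∈ β) :
    β = diag k ∨ β = ρ ∨ β = θ ∨ β = Set.univ := by
  classical
  by_cases h1 : β ⊆ θ
  · by_cases h0 : β ⊆ diag k
    · exact Or.inl (Set.Subset.antisymm h0 hd)
    · right; right; left
      obtain ⟨⟨a, b⟩, hab, habd⟩ := Set.not_subset.mp h0
      have hne : a ≠ b := habd
      apply Set.Subset.antisymm h1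
      rintro ⟨x, y⟩ hxy
      set u : Fin k → Fin k := fun z => if z = b then y else x with hu
      have pθ : ∀ z z', (z, z') ∈ θ → (u z, u z') ∈ θ := by
        intro z z' _
        simp only [hu]
        split_ifs
        · exact hθ.1 y
        · exact hθ.2.1 _ _ hxy
        · exact hxy
        · exact hθ.1 x
      have pρ : ∀ z z', (z, z') ∈ ρ → (u z, u z') ∈ ρ := by
        intro z z' _
        simp only [hu]
        split_ifs
        · exact hρ.1 y
        · exact hρ.2.1 _ _ (hss hxy)
        · exact hss hxy
        · exact hρ.1 x
      have := inv1 u pθ pρ a b hab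
      simpa only [hu, if_neg hne, if_pos rfl] using this
  · obtain ⟨⟨a, b⟩, hab, habθ⟩ := Set.not_subset.mp h1
    by_cases h2 : β ⊆ ρ
    · right; left
      apply Set.Subset.antisymm h2
      rintro ⟨x, y⟩ hxy
      set u : Fin k → Fin k := fun z => if (z, b) ∈ θ then y else x with hu
      have pθ : ∀ z z', (z, z') ∈ θ → (u z, u z') ∈ θ := by
        intro z z' h
        have e : (z, b) ∈ θ ↔ (z', b) ∈ θ :=
          ⟨fun h' => hθ.2.2 _ _ _ (hθ.2.1 _ _ h) h', fun h' => hθ.2.2 _ _ _ h h'⟩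
        simp only [hu]
        by_cases hz : (z, b) ∈ θ
        · rw [if_pos hz, if_pos (e.1 hz)]; exact hθ.1 y
        · rw [if_neg hz, if_neg (fun h' => hz (e.2 h'))]; exact hθ.1 x
      have pρ : ∀ z z', (z, z') ∈ ρ → (u z, u z') ∈ ρ := by
        intro z z' _
        simp only [hu]
        split_ifs
        · exact hρ.1 y
        · exact hρ.2.1 _ _ hxy
        · exact hxy
        · exact hρ.1 x
      have := inv1 u pθ pρ a b hab
      simpa only [hu, if_neg habθ, if_pos (hθ.1 b)] using this
    · right; right; right
      obtain ⟨⟨c, d⟩, hcd, hcdρ⟩ := Set.not_subset.mp h2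
      apply Set.eq_univ_of_forall
      rintro ⟨x, y⟩
      set u : Fin k → Fin k := fun z => if (z, d) ∈ ρ then y else x with hu
      have pρ : ∀ z z', (z, z') ∈ ρ → (u z, u z') ∈ ρ := by
        intro z z' h
        have e : (z, d) ∈ ρ ↔ (z', d) ∈ ρ :=
          ⟨fun h' => hρ.2.2 _ _ _ (hρ.2.1 _ _ h) h', fun h' => hρ.2.2 _ _ _ h h'⟩
        simp only [hu]
        by_cases hz : (z, d) ∈ ρ
        · rw [if_pos hz, if_pos (e.1 hz)]; exact hρ.1 y
        · rw [if_neg hz, if_neg (fun h' => hz (e.2 h'))]; exact hρ.1 x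
      have pθ : ∀ z z', (z, z') ∈ θ → (u z, u z') ∈ θ := by
        intro z z' h
        have e : (z, d) ∈ ρ ↔ (z', d) ∈ ρ := by
          have h' := hss h
          exact ⟨fun h'' => hρ.2.2 _ _ _ (hρ.2.1 _ _ h') h'', fun h'' => hρ.2.2 _ _ _ h' h''⟩
        simp only [hu]
        by_cases hz : (z, d) ∈ ρ
        · rw [if_pos hz, if_pos (e.1 hz)]; exact hθ.1 y
        · rw [if_neg hz, if_neg (fun h' => hz (e.2 h'))]; exact hθ.1 x
      have := inv1 u pθ pρ c d hcd
      simpa only [hu, if_neg hcdρ, if_pos (hρ.1 d)] using this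

/-- Case (b): ρ ∩ θ = Δ and ρ ∘ θ = everything. -/
lemma caseB {θ ρ : Set (Fin k × Fin k)} (hθ : IsEquivRel θ) (hρ : IsEquivRel ρ)
    (hdisj : ρ ∩ θ = diag k) (hcomp : relComp ρ θ = Set.univ)
    (β : Set (Fin k × Fin k)) (hd : diag k ⊆ β)
    (inv1 : ∀ u : Fin k → Fin k, (∀ x y, (x, y) ∈ θ → (u x, u y) ∈ θ) →
      (∀ x y, (x, y) ∈ ρ → (u x, u y) ∈ ρ) → ∀ p q, (p, q) ∈ β → (u p, u q) ∈ β)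
    (inv2 : ∀ f : Fin k → Fin k → Fin k,
      (∀ x x' y y', (x, x') ∈ θ → (y, y') ∈ θ → (f x y, f x' y') ∈ θ) →
      (∀ x x' y y', (x, x') ∈ ρ → (y, y') ∈ ρ → (f x y, f x' y') ∈ ρ) →
      ∀ p q r s, (p, q) ∈ β → (r, s) ∈ β → (f p r, f q s) ∈ β) :
    β = diag k ∨ β = ρ ∨ β = θ ∨ β = Set.univ := by
  classical
  have uniq : ∀ x y : Fin k, (x, y) ∈ ρ → (x, y) ∈ θ → x = y := by
    intro x y h1 h2
    have : (x, y) ∈ ρ ∩ θ := ⟨h1, h2⟩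
    rwa [hdisj] at this
  have hF : ∀ u v : Fin k, ∃ w, (w, u) ∈ θ ∧ (w, v) ∈ ρ := by
    intro u v
    have : ((v, u) : Fin k × Fin k) ∈ relComp ρ θ := by rw [hcomp]; trivial
    obtain ⟨b, hb1, hb2⟩ := this
    exact ⟨b, hb2, hρ.2.1 _ _ hb1⟩
  choose F hFθ hFρ using hF
  have fchar : ∀ u v w : Fin k, (w, u) ∈ θ → (w, v) ∈ ρ → w = F u v := by
    intro u v w h1 h2
    exact uniq _ _ (hρ.2.2 _ _ _ h2 (hρ.2.1 _ _ (hFρ u v)))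
      (hθ.2.2 _ _ _ h1 (hθ.2.1 _ _ (hFθ u v)))
  have presFθ : ∀ x x' y y' : Fin k, (x, x') ∈ θ →
      (F x y, F x' y') ∈ θ := by
    intro x x' y y' h
    exact hθ.2.2 _ _ _ (hFθ x y) (hθ.2.2 _ _ _ h (hθ.2.1 _ _ (hFθ x' y')))
  have presFρ : ∀ x x' y y' : Fin k, (y, y') ∈ ρ →
      (F x y, F x' y') ∈ ρ := by
    intro x x' y y' h
    exact hρ.2.2 _ _ _ (hFρ x y) (hρ.2.2 _ _ _ h (hρ.2.1 _ _ (hFρ x' y')))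
  -- generic step: from (a,b) ∈ β we may produce (x,y) ∈ β whenever the tc-maps behave
  have step : ∀ a b x y : Fin k, (a, b) ∈ β →
      ∀ g h' : Fin k → Fin k,
      (∀ z z', (z, z') ∈ θ → (g z, g z') ∈ θ) →
      (∀ z z', (z, z') ∈ ρ → (h' z, h' z') ∈ ρ) →
      g a = x → h' a = x → (g b, y) ∈ θ → (h' b, y) ∈ ρ → (x, y) ∈ β := by
    intro a b x y hab g h' pg ph ga ha gb hb
    set u : Fin k → Fin k := fun z => F (g z) (h' z) with hu
    have pθ : ∀ z z', (z, z') ∈ θ → (u z, u z') ∈ θ := fun z z' h =>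
      presFθ _ _ _ _ (pg z z' h)
    have pρ : ∀ z z', (z, z') ∈ ρ → (u z, u z') ∈ ρ := fun z z' h =>
      presFρ _ _ _ _ (ph z z' h)
    have key := inv1 u pθ pρ a b hab
    have ea : u a = x := by
      rw [hu]; simp only []
      rw [ga, ha]
      exact (fchar x x x (hθ.1 x) (hρ.1 x)).symm
    have eb : u b = y := by
      rw [hu]; simp only []
      exact (fchar (g b) (h' b) y (hθ.2.1 _ _ gb) (hρ.2.1 _ _ hb)).symm
    rwa [ea, eb] at key
  by_cases h1 : β ⊆ θ
  · by_cases h2 : β ⊆ ρ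
    · left
      apply Set.Subset.antisymm _ hd
      intro p hp
      have : p ∈ ρ ∩ θ := ⟨h2 hp, h1 hp⟩
      rwa [hdisj] at this
    · right; right; left
      obtain ⟨⟨a, b⟩, hab, habρ⟩ := Set.not_subset.mp h2
      have habθ := h1 hab
      apply Set.Subset.antisymm h1
      rintro ⟨x, y⟩ hxy
      refine step a b x y hab (tc θ a a x x) (tc ρ a b x y)
        (fun z z' h => tc_pres hθ _ _ _ _ h) (fun z z' h => tc_pres hρ _ _ _ _ h)
        (tc_eval_left _ _ _ (hθ.1 a)) (tc_eval_left _ _ _ (hρ.1 a)) ?_ ?_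
      · rw [tc_eval_left (θ := θ) _ x x (hθ.2.1 _ _ habθ)]; exact hxy
      · rw [tc_eval_mid (θ := ρ) x y (fun h => habρ (hρ.2.1 _ _ h)) (hρ.1 b)]
        exact hρ.1 y
  · obtain ⟨⟨a, b⟩, hab, habθ⟩ := Set.not_subset.mp h1
    by_cases h2 : β ⊆ ρ
    · right; left
      have habρ := h2 hab
      apply Set.Subset.antisymm h2
      rintro ⟨x, y⟩ hxy
      refine step a b x y hab (tc θ a b x y) (tc ρ a a x x)
        (fun z z' h => tc_pres hθ _ _ _ _ h) (fun z z' h => tc_pres hρ _ _ _ _ h)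
        (tc_eval_left _ _ _ (hθ.1 a)) (tc_eval_left _ _ _ (hρ.1 a)) ?_ ?_
      · rw [tc_eval_mid (θ := θ) x y (fun h => habθ (hθ.2.1 _ _ h)) (hθ.1 b)]
        exact hθ.1 y
      · rw [tc_eval_left (θ := ρ) _ x x (hρ.2.1 _ _ habρ)]; exact hxy
    · right; right; right
      obtain ⟨⟨c, d⟩, hcd, hcdρ⟩ := Set.not_subset.mp h2
      -- build a pair in β related by neither θ nor ρ
      set p := F a c with hp
      set q := F b d with hq
      have hpq : (p, q) ∈ β := inv2 F (fun x x' y y' h _ => presFθ x x' y y' h)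
        (fun x x' y y' _ h => presFρ x x' y y' h) a b c d hab hcd
      have hpqθ : (p, q) ∉ θ := by
        intro h
        exact habθ (hθ.2.2 _ _ _ (hθ.2.1 _ _ (hFθ a c)) (hθ.2.2 _ _ _ h (hFθ b d)))
      have hpqρ : (p, q) ∉ ρ := by
        intro h
        exact hcdρ (hρ.2.2 _ _ _ (hρ.2.1 _ _ (hFρ a c)) (hρ.2.2 _ _ _ h (hFρ b d)))
      apply Set.eq_univ_of_forall
      rintro ⟨x, y⟩
      refine step p q x y hpq (tc θ p q x y) (tc ρ p q x y)
        (fun z z' h => tc_pres hθ _ _ _ _ h) (fun z z' h => tc_pres hρ _ _ _ _ h)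
        (tc_eval_left _ _ _ (hθ.1 p)) (tc_eval_left _ _ _ (hρ.1 p)) ?_ ?_
      · rw [tc_eval_mid (θ := θ) x y (fun h => hpqθ (hθ.2.1 _ _ h)) (hθ.1 q)]
        exact hθ.1 y
      · rw [tc_eval_mid (θ := ρ) x y (fun h => hpqρ (hρ.2.1 _ _ h)) (hρ.1 q)]
        exact hρ.1 y

end Aux

/-- If `θ` and `ρ` are distinct nontrivial equivalence relations satisfying
condition (a) or (b), then any nonempty binary relation `β` with
`Pol(θ) ∩ Pol(ρ) ⊆ Pol(β)` is one of `Δ`, `ρ`, `θ`, `E_k²`. -/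
theorem stmt3 (k : ℕ) (θ ρ : Set (Fin k × Fin k))
    (hθ : NontrivEquiv θ) (hρ : NontrivEquiv ρ) (hne : θ ≠ ρ)
    (hcond : (θ ⊂ ρ ∨ ρ ⊂ θ) ∨ (ρ ∩ θ = diag k ∧ relComp ρ θ = Set.univ))
    (β : Set (Fin k × Fin k)) (hβ : β.Nonempty)
    (hsub : PolB θ ∩ PolB ρ ⊆ PolB β) :
    β = diag k ∨ β = ρ ∨ β = θ ∨ β = Set.univ := by
  classical
  obtain ⟨hθe, _, _⟩ := hθ
  obtain ⟨hρe, _, _⟩ := hρ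
  -- unary invariance
  have inv1 : ∀ u : Fin k → Fin k, (∀ x y, (x, y) ∈ θ → (u x, u y) ∈ θ) →
      (∀ x y, (x, y) ∈ ρ → (u x, u y) ∈ ρ) → ∀ p q, (p, q) ∈ β → (u p, u q) ∈ β := by
    intro u h1 h2 p q hpq
    have hm : (⟨1, fun v => u (v 0)⟩ : Ops k) ∈ PolB θ ∩ PolB ρ :=
      ⟨fun a b h => h1 _ _ (h 0), fun a b h => h2 _ _ (h 0)⟩
    exact hsub hm (fun _ => p) (fun _ => q) (fun _ => hpq)
  -- binary invariance
  have inv2 : ∀ f : Fin k → Fin k → Fin k,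
      (∀ x x' y y', (x, x') ∈ θ → (y, y') ∈ θ → (f x y, f x' y') ∈ θ) →
      (∀ x x' y y', (x, x') ∈ ρ → (y, y') ∈ ρ → (f x y, f x' y') ∈ ρ) →
      ∀ p q r s, (p, q) ∈ β → (r, s) ∈ β → (f p r, f q s) ∈ β := by
    intro f h1 h2 p q r s hpq hrs
    have hm : (⟨2, fun v => f (v 0) (v 1)⟩ : Ops k) ∈ PolB θ ∩ PolB ρ :=
      ⟨fun a b h => h1 _ _ _ _ (h 0) (h 1), fun a b h => h2 _ _ _ _ (h 0) (h 1)⟩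
    have := hsub hm (fun i => if (i : ℕ) = 0 then p else r)
      (fun i => if (i : ℕ) = 0 then q else s) (fun i => by
        by_cases h : (i : ℕ) = 0 <;> simp [h] <;> assumption)
    simpa using this
  -- Δ ⊆ β via constants
  have hd : diag k ⊆ β := by
    obtain ⟨⟨p, q⟩, hpq⟩ := hβ
    rintro ⟨x, y⟩ hxy
    have hx : x = y := hxy
    subst hx
    exact inv1 (fun _ => x) (fun _ _ _ => hθe.1 x) (fun _ _ _ => hρe.1 x) p q hpq
  rcases hcond with (hss | hss) | ⟨hdisj, hcomp⟩
  · exact caseA hθe hρe hss.subset β hd inv1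
  · have := caseA hρe hθe hss.subset β hd
      (fun u h1 h2 => inv1 u h2 h1)
    tauto
  · exact caseB hθe hρe hdisj hcomp β hd inv1 inv2
end

section
/- Let θ and ρ be two distinct nontrivial equivalence relations on E_k satisfying either (a) θ ⊊ ρ or ρ ⊊ θ, or (b) ρ ∩ θ = Δ and ρ ∘ θ = E_k². Then Pol(θ) ∩ Pol(ρ) contains a majority operation, i.e., a ternary operation m on E_k with m(x,x,y) = m(x,y,x) = m(y,x,x) = x for all x, y ∈ E_k. -/
/-!
In the nested case `Δ ⊆ θ ⊆ ρ` the majority operation is built level by level: across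
`ρ`-classes it is the dual discriminator taken up to `ρ`, inside a `ρ`-class the same
construction up to `θ`, and inside a `θ`-class the ordinary dual discriminator
`(x, y, z) ↦ if x = y then x else z`. A dual discriminator up to `ρ` only compares
`ρ`-classes, so it preserves `ρ` and every finer equivalence; gluing an operation into the
`ρ`-classes keeps `ρ` preserved as long as that operation returns one of its arguments, and
keeps a finer relation preserved whenever the glued operation preserves it.

In the complementary case `x ↦ (x/ρ, x/θ)` identifies the carrier with `(E/ρ) × (E/θ)`, and
the dual discriminators up to `ρ` and up to `θ`, taken coordinatewise, give the majority
operation.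
-/

section TernaryOperations

variable {α : Type*}

def PreservesRel (f : α → α → α → α) (θ : Set (α × α)) : Prop :=
  ∀ ⦃x y z x' y' z'⦄, (x, x') ∈ θ → (y, y') ∈ θ → (z, z') ∈ θ →
    (f x y z, f x' y' z') ∈ θ

def IsMajority (f : α → α → α → α) : Prop :=
  ∀ x y, f x x y = x ∧ f x y x = x ∧ f y x x = x

def IsConservative (f : α → α → α → α) : Prop :=
  ∀ x y z, f x y z = x ∨ f x y z = y ∨ f x y z = z

open Classical in
/-- The dual discriminator up to `θ`; for `θ` the diagonal it is the usual one. -/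
noncomputable def dualDiscr (θ : Set (α × α)) (x y z : α) : α :=
  if (x, y) ∈ θ then x else z

open Classical in
noncomputable def glueDualDiscr (θ : Set (α × α)) (g : α → α → α → α) (x y z : α) : α :=
  if (x, y) ∈ θ ∧ (y, z) ∈ θ then g x y z else dualDiscr θ x y z

variable {θ σ : Set (α × α)}

lemma IsEquivRel.mem_iff_of_mem_s4 (hθ : IsEquivRel θ) {x y x' y' : α}
    (hx : (x, x') ∈ θ) (hy : (y, y') ∈ θ) : (x, y) ∈ θ ↔ (x', y') ∈ θ :=
  ⟨fun h => hθ.2.2 _ _ _ (hθ.2.1 _ _ hx) (hθ.2.2 _ _ _ h hy),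
   fun h => hθ.2.2 _ _ _ hx (hθ.2.2 _ _ _ h (hθ.2.1 _ _ hy))⟩

lemma preservesRel_dualDiscr (hθ : IsEquivRel θ) (hσθ : σ ⊆ θ) :
    PreservesRel (dualDiscr θ) σ := by
  intro x y z x' y' z' hx hy hz
  have hxy := hθ.mem_iff_of_mem_s4 (hσθ hx) (hσθ hy)
  unfold dualDiscr
  by_cases h : (x, y) ∈ θ
  · simpa [h, hxy.mp h] using hx
  · simpa [h, mt hxy.mpr h] using hz

lemma isConservative_dualDiscr : IsConservative (dualDiscr θ) := by
  intro x y z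
  unfold dualDiscr
  split_ifs <;> simp

lemma isMajority_dualDiscr_diagonal : IsMajority (dualDiscr (Set.diagonal α)) := by
  intro x y
  refine ⟨if_pos rfl, ite_self x, ?_⟩
  unfold dualDiscr
  split_ifs with h
  exacts [h, rfl]

lemma dualDiscr_apply_self_self_mem (hθ : IsEquivRel θ) (x y : α) :
    (dualDiscr θ y x x, x) ∈ θ := by
  unfold dualDiscr
  split_ifs with h
  exacts [h, hθ.1 x]

lemma IsConservative.glueDualDiscr {g : α → α → α → α} (hg : IsConservative g) :
    IsConservative (glueDualDiscr θ g) := by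
  intro x y z
  unfold _root_.glueDualDiscr
  split_ifs
  exacts [hg x y z, isConservative_dualDiscr x y z]

lemma IsMajority.glueDualDiscr (hθ : IsEquivRel θ) {g : α → α → α → α} (hg : IsMajority g) :
    IsMajority (glueDualDiscr θ g) := by
  intro x y
  obtain ⟨h₁, h₂, h₃⟩ := hg x y
  refine ⟨?_, ?_, ?_⟩ <;> unfold _root_.glueDualDiscr dualDiscr <;> split_ifs <;> simp_all [hθ.1 x]

lemma preservesRel_glueDualDiscr (hθ : IsEquivRel θ) (hσθ : σ ⊆ θ) {g : α → α → α → α}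
    (hg : ∀ ⦃x y z x' y' z'⦄, (x, y) ∈ θ → (y, z) ∈ θ → (x', y') ∈ θ → (y', z') ∈ θ →
      (x, x') ∈ σ → (y, y') ∈ σ → (z, z') ∈ σ → (g x y z, g x' y' z') ∈ σ) :
    PreservesRel (glueDualDiscr θ g) σ := by
  intro x y z x' y' z' hx hy hz
  have hxy := hθ.mem_iff_of_mem_s4 (hσθ hx) (hσθ hy)
  have hyz := hθ.mem_iff_of_mem_s4 (hσθ hy) (hσθ hz)
  unfold glueDualDiscr
  by_cases h : (x, y) ∈ θ ∧ (y, z) ∈ θ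
  · rw [if_pos h, if_pos ⟨hxy.mp h.1, hyz.mp h.2⟩]
    exact hg h.1 h.2 (hxy.mp h.1) (hyz.mp h.2) hx hy hz
  · rw [if_neg h, if_neg (by rwa [← hxy, ← hyz])]
    exact preservesRel_dualDiscr hθ hσθ hx hy hz

lemma preservesRel_glueDualDiscr_self (hθ : IsEquivRel θ) {g : α → α → α → α}
    (hg : IsConservative g) : PreservesRel (glueDualDiscr θ g) θ := by
  refine preservesRel_glueDualDiscr hθ subset_rfl fun x y z x' y' z' hxy hyz hxy' hyz' hx _ _ => ?_
  have hgx : (g x y z, x) ∈ θ := by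
    rcases hg x y z with h | h | h <;> rw [h]
    exacts [hθ.1 x, hθ.2.1 _ _ hxy, hθ.2.1 _ _ (hθ.2.2 _ _ _ hxy hyz)]
  have hgx' : (g x' y' z', x') ∈ θ := by
    rcases hg x' y' z' with h | h | h <;> rw [h]
    exacts [hθ.1 x', hθ.2.1 _ _ hxy', hθ.2.1 _ _ (hθ.2.2 _ _ _ hxy' hyz')]
  exact hθ.2.2 _ _ _ hgx (hθ.2.2 _ _ _ hx (hθ.2.1 _ _ hgx'))

theorem exists_majority_of_subset {θ ρ : Set (α × α)} (hθ : IsEquivRel θ) (hρ : IsEquivRel ρ)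
    (hθρ : θ ⊆ ρ) :
    ∃ f : α → α → α → α, PreservesRel f θ ∧ PreservesRel f ρ ∧ IsMajority f := by
  set g := glueDualDiscr θ (dualDiscr (Set.diagonal α))
  have hg_cons : IsConservative g := isConservative_dualDiscr.glueDualDiscr
  have hg_maj : IsMajority g := isMajority_dualDiscr_diagonal.glueDualDiscr hθ
  have hgθ : PreservesRel g θ := preservesRel_glueDualDiscr_self hθ isConservative_dualDiscr
  exact ⟨glueDualDiscr ρ g,
    preservesRel_glueDualDiscr hρ hθρ fun _ _ _ _ _ _ _ _ _ _ hx hy hz => hgθ hx hy hz,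
    preservesRel_glueDualDiscr_self hρ hg_cons, hg_maj.glueDualDiscr hρ⟩

theorem exists_majority_of_inter_of_comp {θ ρ : Set (α × α)} (hθ : IsEquivRel θ)
    (hρ : IsEquivRel ρ) (hinter : ρ ∩ θ ⊆ Set.diagonal α)
    (hcomp : ∀ a c, ∃ b, (a, b) ∈ ρ ∧ (b, c) ∈ θ) :
    ∃ f : α → α → α → α, PreservesRel f θ ∧ PreservesRel f ρ ∧ IsMajority f := by
  choose w hwρ hwθ using hcomp
  have hw_eq : ∀ {a c x}, (x, a) ∈ ρ → (x, c) ∈ θ → w a c = x := fun hρa hθc =>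
    hinter ⟨hρ.2.2 _ _ _ (hρ.2.1 _ _ (hwρ _ _)) (hρ.2.1 _ _ hρa),
      hθ.2.2 _ _ _ (hwθ _ _) (hθ.2.1 _ _ hθc)⟩
  refine ⟨fun x y z => w (dualDiscr ρ x y z) (dualDiscr θ x y z), ?_, ?_, ?_⟩
  · intro x y z x' y' z' hx hy hz
    have hd := preservesRel_dualDiscr hθ subset_rfl hx hy hz
    exact hθ.2.2 _ _ _ (hwθ _ _) (hθ.2.2 _ _ _ hd (hθ.2.1 _ _ (hwθ _ _)))
  · intro x y z x' y' z' hx hy hz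
    have hd := preservesRel_dualDiscr hρ subset_rfl hx hy hz
    exact hρ.2.2 _ _ _ (hρ.2.1 _ _ (hwρ _ _)) (hρ.2.2 _ _ _ hd (hwρ _ _))
  · intro x y
    simp only [dualDiscr, if_pos (hρ.1 x), if_pos (hθ.1 x), ite_self]
    exact ⟨hw_eq (hρ.1 x) (hθ.1 x), hw_eq (hρ.1 x) (hθ.1 x),
      hw_eq (hρ.2.1 _ _ (dualDiscr_apply_self_self_mem hρ x y))
        (hθ.2.1 _ _ (dualDiscr_apply_self_self_mem hθ x y))⟩

end TernaryOperations

lemma PreservesRel.mem_polB {k : ℕ} {θ : Set (Fin k × Fin k)}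
    {f : Fin k → Fin k → Fin k → Fin k} (hf : PreservesRel f θ) :
    (⟨3, fun x => f (x 0) (x 1) (x 2)⟩ : Ops k) ∈ PolB θ :=
  fun _ _ hab => hf (hab 0) (hab 1) (hab 2)

theorem stmt4_general (k : ℕ) (θ ρ : Set (Fin k × Fin k))
    (hθ : NontrivEquiv θ) (hρ : NontrivEquiv ρ)
    (hcond : (θ ⊂ ρ ∨ ρ ⊂ θ) ∨ (ρ ∩ θ = diag k ∧ relComp ρ θ = Set.univ)) :
    ∃ m : (Fin 3 → Fin k) → Fin k,
      (⟨3, m⟩ : Ops k) ∈ PolB θ ∩ PolB ρ ∧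
      ∀ x y : Fin k, m ![x, x, y] = x ∧ m ![x, y, x] = x ∧ m ![y, x, x] = x := by
  suffices ∃ f : Fin k → Fin k → Fin k → Fin k,
      PreservesRel f θ ∧ PreservesRel f ρ ∧ IsMajority f by
    obtain ⟨f, hfθ, hfρ, hf⟩ := this
    exact ⟨fun x => f (x 0) (x 1) (x 2), ⟨hfθ.mem_polB, hfρ.mem_polB⟩, hf⟩
  rcases hcond with (hθρ | hρθ) | ⟨hinter, hcomp⟩
  · exact exists_majority_of_subset hθ.1 hρ.1 hθρ.subset
  · obtain ⟨f, hfρ, hfθ, hf⟩ := exists_majority_of_subset hρ.1 hθ.1 hρθ.subset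
    exact ⟨f, hfθ, hfρ, hf⟩
  · refine exists_majority_of_inter_of_comp hθ.1 hρ.1 hinter.subset fun a c => ?_
    exact (hcomp ▸ Set.mem_univ (a, c) : (a, c) ∈ relComp ρ θ)

/-- If `θ` and `ρ` are distinct nontrivial equivalence relations satisfying
condition (a) or (b), then `Pol(θ) ∩ Pol(ρ)` contains a majority operation. -/
theorem stmt4 (k : ℕ) (θ ρ : Set (Fin k × Fin k))
    (hθ : NontrivEquiv θ) (hρ : NontrivEquiv ρ) (hne : θ ≠ ρ)
    (hcond : (θ ⊂ ρ ∨ ρ ⊂ θ) ∨ (ρ ∩ θ = diag k ∧ relComp ρ θ = Set.univ)) :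
    ∃ m : (Fin 3 → Fin k) → Fin k,
      (⟨3, m⟩ : Ops k) ∈ PolB θ ∩ PolB ρ ∧
      ∀ x y : Fin k, m ![x, x, y] = x ∧ m ![x, y, x] = x ∧ m ![y, x, x] = x :=
  stmt4_general k θ ρ hθ hρ hcond
end

section
/- Let ρ and θ be two nontrivial equivalence relations on E_k which are incomparable (neither is contained in the other). If ρ ∩ θ = Δ and ρ ∘ θ ≠ E_k², then setting σ = (ρ ∘ θ) ∩ (θ ∘ ρ), one has Pol(θ) ∩ Pol(ρ) ⊊ Pol(θ) ∩ Pol(σ) ⊊ Pol(θ). -/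
/-!
A common polymorphism of `α` and `β` preserves `α ∘ β` and `α ∩ β`, which gives both inclusions.
Strictness is witnessed by unary operations constant on `θ`-classes, which always preserve `θ`.
Pick `(p, q) ∈ ρ \ θ`, `(a, b) ∈ θ \ ρ` and `(c, d) ∉ ρ ∘ θ`. Sending the `θ`-class of `q` to `b`
and everything else to `a` keeps all values in one `θ`-class, hence preserves `σ ⊇ θ`, but maps
`(p, q) ∈ ρ` to `(a, b) ∉ ρ`. Using `c, d` instead of `a, b` maps `(p, q) ∈ σ` to `(c, d) ∉ σ`.
-/

section

variable {k : ℕ} {α β θ τ : Set (Fin k × Fin k)}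

theorem PolB_inter_subset_PolB_inter : PolB α ∩ PolB β ⊆ PolB (α ∩ β) :=
  fun _ ⟨hα, hβ⟩ a b hab => ⟨hα a b fun i => (hab i).1, hβ a b fun i => (hab i).2⟩

theorem PolB_inter_subset_PolB_relComp : PolB α ∩ PolB β ⊆ PolB (relComp α β) := by
  rintro f ⟨hα, hβ⟩ a b hab
  choose c hac hcb using hab
  exact ⟨f.2 c, hα a c hac, hβ c b hcb⟩

theorem subset_relComp_of_refl_left (hα : ∀ x, (x, x) ∈ α) : β ⊆ relComp α β :=
  fun p h => ⟨p.1, hα p.1, h⟩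

theorem subset_relComp_of_refl_right (hβ : ∀ x, (x, x) ∈ β) : α ⊆ relComp α β :=
  fun p h => ⟨p.2, h, hβ p.2⟩

open Classical in
noncomputable def classIndicator (θ : Set (Fin k × Fin k)) (q u v : Fin k) : Ops k :=
  ⟨1, fun x => if (x 0, q) ∈ θ then v else u⟩

theorem classIndicator_mem_PolB (hθ : IsEquivRel θ) (q u v : Fin k) :
    classIndicator θ q u v ∈ PolB θ := by
  obtain ⟨refl, symm, trans⟩ := hθ
  simp only [classIndicator, PolB, Set.mem_ofPred_eq]
  intro a b hab
  have hclass : (a 0, q) ∈ θ ↔ (b 0, q) ∈ θ :=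
    ⟨trans _ _ _ (symm _ _ (hab 0)), trans _ _ _ (hab 0)⟩
  split_ifs with ha hb hb
  · exact refl v
  · exact absurd (hclass.1 ha) hb
  · exact absurd (hclass.2 hb) ha
  · exact refl u

theorem classIndicator_mem_PolB_of_subset (hθ : IsEquivRel θ) (q : Fin k) {u v : Fin k}
    (huv : (u, v) ∈ θ) (hθτ : θ ⊆ τ) : classIndicator θ q u v ∈ PolB τ := by
  obtain ⟨refl, symm, trans⟩ := hθ
  have hval : ∀ x, (u, (classIndicator θ q u v).2 x) ∈ θ := by
    intro x
    simp only [classIndicator]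
    split_ifs
    exacts [huv, refl u]
  exact fun a b _ => hθτ (trans _ _ _ (symm _ _ (hval a)) (hval b))

theorem classIndicator_notMem_PolB {p q u v : Fin k} (hpτ : (p, q) ∈ τ) (hpθ : (p, q) ∉ θ)
    (hq : (q, q) ∈ θ) (huv : (u, v) ∉ τ) : classIndicator θ q u v ∉ PolB τ := by
  intro h
  have := h (fun _ => p) (fun _ => q) (fun _ => hpτ)
  simp only [classIndicator, if_neg hpθ, if_pos hq] at this
  exact huv this

end

theorem stmt7_general (k : ℕ) (θ ρ : Set (Fin k × Fin k))
    (hθ : NontrivEquiv θ) (hρ : NontrivEquiv ρ)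
    (hinc1 : ¬ ρ ⊆ θ) (hinc2 : ¬ θ ⊆ ρ)
    (hne : relComp ρ θ ≠ Set.univ) :
    PolB θ ∩ PolB ρ ⊂ PolB θ ∩ PolB (relComp ρ θ ∩ relComp θ ρ) ∧
      PolB θ ∩ PolB (relComp ρ θ ∩ relComp θ ρ) ⊂ PolB θ := by
  obtain ⟨⟨p, q⟩, hpqρ, hpqθ⟩ := Set.not_subset.mp hinc1
  obtain ⟨⟨a, b⟩, habθ, habρ⟩ := Set.not_subset.mp hinc2
  obtain ⟨⟨c, d⟩, -, hcd⟩ := Set.exists_of_ssubset (Set.ssubset_univ_iff.mpr hne)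
  set σ := relComp ρ θ ∩ relComp θ ρ
  have hθσ : θ ⊆ σ := fun _ h =>
    ⟨subset_relComp_of_refl_left hρ.1.1 h, subset_relComp_of_refl_right hρ.1.1 h⟩
  have hpqσ : (p, q) ∈ σ :=
    ⟨subset_relComp_of_refl_right hθ.1.1 hpqρ, subset_relComp_of_refl_left hθ.1.1 hpqρ⟩
  have hsub : PolB θ ∩ PolB ρ ⊆ PolB θ ∩ PolB σ := fun f hf =>
    ⟨hf.1, PolB_inter_subset_PolB_inter
      ⟨PolB_inter_subset_PolB_relComp ⟨hf.2, hf.1⟩, PolB_inter_subset_PolB_relComp hf⟩⟩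
  refine ⟨(Set.ssubset_iff_of_subset hsub).2 ⟨classIndicator θ q a b, ?_, ?_⟩,
    (Set.ssubset_iff_of_subset Set.inter_subset_left).2 ⟨classIndicator θ q c d, ?_, ?_⟩⟩
  · exact ⟨classIndicator_mem_PolB hθ.1 q a b,
      classIndicator_mem_PolB_of_subset hθ.1 q habθ hθσ⟩
  · exact fun h => classIndicator_notMem_PolB hpqρ hpqθ (hθ.1.1 q) habρ h.2
  · exact classIndicator_mem_PolB hθ.1 q c d
  · exact fun h => classIndicator_notMem_PolB hpqσ hpqθ (hθ.1.1 q) (fun hσ => hcd hσ.1) h.2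

/-- For incomparable nontrivial equivalence relations `ρ`, `θ` with
`ρ ∩ θ = Δ` and `ρ ∘ θ ≠ E_k²`, setting `σ = (ρ ∘ θ) ∩ (θ ∘ ρ)`:
`Pol(θ) ∩ Pol(ρ) ⊊ Pol(θ) ∩ Pol(σ) ⊊ Pol(θ)`. -/
theorem stmt7 (k : ℕ) (θ ρ : Set (Fin k × Fin k))
    (hθ : NontrivEquiv θ) (hρ : NontrivEquiv ρ)
    (hinc1 : ¬ ρ ⊆ θ) (hinc2 : ¬ θ ⊆ ρ)
    (hγ : ρ ∩ θ = diag k) (hne : relComp ρ θ ≠ Set.univ) :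
    PolB θ ∩ PolB ρ ⊂ PolB θ ∩ PolB (relComp ρ θ ∩ relComp θ ρ) ∧
      PolB θ ∩ PolB (relComp ρ θ ∩ relComp θ ρ) ⊂ PolB θ :=
  stmt7_general k θ ρ hθ hρ hinc1 hinc2 hne
end
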